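/- arXiv:2001.04264 — 9 statements merged into one kernel-verified Lean document; each statement's English description precedes it below -/
import Mathlib

section
/- If X(t) solves dX/dt = −Σᵢ ρᵢ(X)(AᵢX + XAᵢ) with ρᵢ(X) = tr(AᵢX) − yᵢ, Aᵢ symmetric, and X(0) is symmetric positive semidefinite of rank r, then X(t) is symmetric positive semidefinite of rank at most r for all t ≥ 0 in the interval of existence. -/
/-!
Put `B(t) = -∑ᵢ ρᵢ(X t) • Aᵢ`; since the `Aᵢ` are symmetric, the flow reads `X' = B X + X Bᴴ`.
If `P' = -Bᴴ P` with `P(t₀) = 1` (a local solution exists by Picard–Lindelöf), then `Pᴴ X P` has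
zero derivative, so for `t` near `t₀` the matrix `X(t₀)` is the congruence `Pᴴ X(t) P` of `X(t)` by
an invertible `P`. Hence the congruence class of `X(t)` is locally constant, thus constant on the
connected line, and congruence by an invertible matrix preserves positive semidefiniteness and rank.
-/

open Matrix Set Filter Topology
open scoped NNReal

theorem exists_eq_forall_mem_Ioo_hasDerivAt_mul_left {R : Type*} [NormedRing R]
    [NormedAlgebra ℝ R] [CompleteSpace R] {B : ℝ → R} (hB : Continuous B) (t₀ : ℝ) (x₀ : R) :
    ∃ ε > 0, ∃ P : ℝ → R, P t₀ = x₀ ∧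
      ∀ t ∈ Ioo (t₀ - ε) (t₀ + ε), HasDerivAt P (B t * P t) t := by
  obtain ⟨K, hK⟩ := (isCompact_Icc (a := t₀ - 1) (b := t₀ + 1)).exists_bound_of_continuousOn
    hB.continuousOn
  set L : ℝ≥0 := K.toNNReal * (‖x₀‖₊ + 1)
  set ε : ℝ := min 1 (1 / (L + 1))
  have hε : 0 < ε := lt_min one_pos (by positivity)
  have hε₁ : ε ≤ 1 := min_le_left _ _
  have hBK : ∀ t ∈ Icc (t₀ - ε) (t₀ + ε), ‖B t‖ ≤ K.toNNReal := fun t ht =>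
    (hK t ⟨by linarith [ht.1], by linarith [ht.2]⟩).trans (Real.le_coe_toNNReal K)
  have hpl : IsPicardLindelof (fun t x => B t * x) (tmin := t₀ - ε) (tmax := t₀ + ε)
      ⟨t₀, by constructor <;> linarith⟩ x₀ 1 0 L K.toNNReal :=
    { lipschitzOnWith := fun t ht => LipschitzWith.lipschitzOnWith <|
        LipschitzWith.of_dist_le_mul fun x y => by
          rw [dist_eq_norm, dist_eq_norm, ← mul_sub]
          exact (norm_mul_le _ _).trans (mul_le_mul_of_nonneg_right (hBK t ht) (norm_nonneg _))
      continuousOn := fun _ _ => (hB.mul continuous_const).continuousOn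
      norm_le := fun t ht x hx => by
        have hx' : ‖x‖ ≤ ‖x₀‖ + 1 := norm_le_norm_add_const_of_dist_le hx
        calc ‖B t * x‖ ≤ ‖B t‖ * ‖x‖ := norm_mul_le _ _
          _ ≤ K.toNNReal * (‖x₀‖ + 1) := mul_le_mul (hBK t ht) hx' (norm_nonneg _) (by positivity)
      mul_max_le := by
        simp only [add_sub_cancel_left, sub_sub_cancel, max_self, NNReal.coe_one,
          NNReal.coe_zero, sub_zero]
        calc (L : ℝ) * ε ≤ L * (1 / (L + 1)) := by gcongr; exact min_le_right _ _
          _ ≤ 1 := by rw [mul_one_div, div_le_one (by positivity)]; linarith }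
  obtain ⟨P, hP₀, hP⟩ := hpl.exists_eq_forall_mem_Icc_hasDerivWithinAt₀
  exact ⟨ε, hε, P, hP₀, fun t ht =>
    (hP t (Ioo_subset_Icc_self ht)).hasDerivAt (Icc_mem_nhds ht.1 ht.2)⟩

section StarCongrOrbit

variable {R : Type*} [Monoid R] [StarMul R]

def starCongrOrbit (x : R) : Set R :=
  range fun u : Rˣ => star (u : R) * x * u

theorem self_mem_starCongrOrbit (x : R) : x ∈ starCongrOrbit x :=
  ⟨1, by simp⟩

theorem starCongrOrbit_star_mul_mul (x : R) (u : Rˣ) :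
    starCongrOrbit (star (u : R) * x * u) = starCongrOrbit x := by
  ext y
  constructor
  · rintro ⟨v, rfl⟩
    exact ⟨u * v, by simp only [Units.val_mul, star_mul, mul_assoc]⟩
  · rintro ⟨v, rfl⟩
    refine ⟨u⁻¹ * v, ?_⟩
    simp only [Units.val_mul, star_mul, mul_assoc]
    simp only [← mul_assoc (star (u⁻¹ : Rˣ) : R), ← star_mul, Units.mul_inv, star_one]
    simp

end StarCongrOrbit

section StarCongruentFlow

variable {R : Type*} [NormedRing R] [NormedAlgebra ℝ R] [CompleteSpace R] [StarRing R]
  [StarModule ℝ R] [ContinuousStar R] {B X : ℝ → R}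

theorem eventually_exists_unit_eq_star_mul_mul (hB : Continuous B)
    (hX : ∀ t, HasDerivAt X (B t * X t + X t * star (B t)) t) (t₀ : ℝ) :
    ∀ᶠ t in 𝓝 t₀, ∃ u : Rˣ, X t₀ = star (u : R) * X t * u := by
  obtain ⟨ε, hε, P, hP₀, hP⟩ := exists_eq_forall_mem_Ioo_hasDerivAt_mul_left
    (B := fun t => -star (B t)) (by fun_prop) t₀ 1
  set I := Ioo (t₀ - ε) (t₀ + ε)
  have ht₀ : t₀ ∈ I := ⟨by linarith, by linarith⟩
  have hconj : ∀ t ∈ I, HasDerivAt (fun s => star (P s) * X s * P s) 0 t := fun t ht => by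
    refine (((hP t ht).star.mul (hX t)).mul (hP t ht)).congr_deriv ?_
    simp only [Pi.mul_apply, star_mul, star_neg, star_star]
    noncomm_ring
  have hconst : ∀ t ∈ I, star (P t) * X t * P t = X t₀ := fun t ht => by
    simpa [hP₀] using isOpen_Ioo.is_const_of_deriv_eq_zero isPreconnected_Ioo
      (fun s hs => (hconj s hs).differentiableAt.differentiableWithinAt)
      (fun s hs => (hconj s hs).deriv) ht ht₀
  have hunit : ∀ᶠ t in 𝓝 t₀, IsUnit (P t) :=
    (hP t₀ ht₀).continuousAt.eventually_mem (Units.isOpen.mem_nhds (by simp [hP₀]))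
  filter_upwards [hunit, isOpen_Ioo.mem_nhds ht₀] with t hu ht
  exact ⟨hu.unit, (hconst t ht).symm⟩

theorem exists_unit_eq_star_mul_mul (hB : Continuous B)
    (hX : ∀ t, HasDerivAt X (B t * X t + X t * star (B t)) t) (t₁ t₂ : ℝ) :
    ∃ u : Rˣ, X t₂ = star (u : R) * X t₁ * u := by
  have hloc : IsLocallyConstant fun t => starCongrOrbit (X t) :=
    (IsLocallyConstant.iff_eventually_eq _).2 fun t₀ =>
      (eventually_exists_unit_eq_star_mul_mul hB hX t₀).mono fun t ⟨u, hu⟩ => by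
        rw [hu, starCongrOrbit_star_mul_mul]
  obtain ⟨u, hu⟩ : X t₂ ∈ starCongrOrbit (X t₁) :=
    hloc.apply_eq_of_preconnectedSpace t₁ t₂ ▸ self_mem_starCongrOrbit (X t₂)
  exact ⟨u, hu.symm⟩

end StarCongruentFlow

-- Mathematically any norm would do; the ℓ²-operator norm is used because instance search sees its
-- topology as the product topology, for which `ContinuousStar` and `hasDerivAt_pi` are stated.
open scoped Matrix.Norms.L2Operator

namespace Matrix

theorem rank_star_mul_mul_of_isUnit {n R : Type*} [Fintype n] [DecidableEq n] [CommRing R]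
    [StarRing R] {U : Matrix n n R} (hU : IsUnit U) (x : Matrix n n R) :
    (star U * x * U).rank = x.rank := by
  rw [rank_mul_eq_left_of_isUnit_det _ _ ((isUnit_iff_isUnit_det U).1 hU),
    rank_mul_eq_right_of_isUnit_det _ _ ((isUnit_iff_isUnit_det _).1 hU.star)]

theorem hasDerivAt_iff_forall_apply {m : Type*} [Fintype m] [DecidableEq m]
    {f : ℝ → Matrix m m ℝ} {f' : Matrix m m ℝ} {t : ℝ} :
    HasDerivAt f f' t ↔ ∀ a b, HasDerivAt (fun s => f s a b) (f' a b) t := by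
  let e : Matrix m m ℝ ≃L[ℝ] (m → m → ℝ) := (ofLinearEquiv ℝ).symm.toContinuousLinearEquiv
  refine ⟨fun h a b => ?_, fun h => ?_⟩
  · exact hasDerivAt_pi.1 (hasDerivAt_pi.1 (e.hasFDerivAt.comp_hasDerivAt t h) a) b
  · exact e.symm.hasFDerivAt.comp_hasDerivAt t (hasDerivAt_pi.2 fun a => hasDerivAt_pi.2 (h a))

end Matrix

/-- The `X`-flow preserves positive semidefiniteness and does not increase rank:
if `X(0)` is symmetric psd of rank `r`, then for all `t ≥ 0`, `X(t)` is psd of rank at most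
`r`. -/
theorem stmt3 {n q : ℕ} (A : Fin q → Matrix (Fin n) (Fin n) ℝ)
    (hA : ∀ i, (A i).IsSymm) (y : Fin q → ℝ) (r : ℕ)
    (X : ℝ → Matrix (Fin n) (Fin n) ℝ)
    (hX : ∀ t : ℝ, ∀ a b : Fin n,
      HasDerivAt (fun s => X s a b)
        ((-(∑ i, (((A i) * X t).trace - y i) •
          ((A i) * X t + X t * (A i)))) a b) t)
    (hX0 : (X 0).PosSemidef) (hrank : (X 0).rank = r) :
    ∀ t : ℝ, 0 ≤ t → (X t).PosSemidef ∧ (X t).rank ≤ r := by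
  intro t _
  set B : ℝ → Matrix (Fin n) (Fin n) ℝ := fun t => -∑ i, ((A i * X t).trace - y i) • A i
  have hXderiv : ∀ t, HasDerivAt X (B t * X t + X t * star (B t)) t := fun t => by
    have hBstar : star (B t) = B t := by
      simp only [B, star_neg, star_sum, star_smul, star_trivial, star_eq_conjTranspose,
        conjTranspose_eq_transpose_of_trivial, (hA _).eq]
    rw [hBstar, hasDerivAt_iff_forall_apply]
    convert hX t using 3
    simp only [B, neg_mul, mul_neg, Finset.sum_mul, Finset.mul_sum, smul_mul_assoc,
      mul_smul_comm, smul_add, Finset.sum_add_distrib, neg_add]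
  have hXcont : Continuous X := continuous_iff_continuousAt.2 fun t => (hXderiv t).continuousAt
  obtain ⟨u, hu⟩ := exists_unit_eq_star_mul_mul (by fun_prop) hXderiv 0 t
  rw [hu, rank_star_mul_mul_of_isUnit u.isUnit]
  exact ⟨u.isUnit.posSemidef_star_left_conjugate_iff.2 hX0, hrank.le⟩
end

section
/- Let A₁,…,A_q be positive semidefinite n×n matrices of ranks r₁,…,r_q with Aᵢ = BᵢBᵢᵀ, Bᵢ ∈ ℝ^{n×rᵢ}, satisfying the rank spread condition: m := Σ rᵢ ≤ n and dim span{columns of all Bᵢ} = m. Then there exists an invertible P ∈ ℝ^{n×n} such that Pᵀ Aᵢ P = Eᵢ for each i, where Eᵢ is the diagonal 0/1 matrix whose ones are exactly in positions Nᵢ = {m_{i−1}+1,…,m_i} (mᵢ = r₁+⋯+rᵢ). -/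
/-!
By the rank spread condition the columns of all the `Bᵢ` are linearly independent, so they extend
to a basis of `ℝⁿ` in which the columns of `Bᵢ` occupy exactly the positions `Nᵢ`. If `M` is the
matrix with this basis as columns, then `M⁻¹ Bᵢ` is the 0/1 matrix selecting the positions `Nᵢ`,
so `M⁻¹ Aᵢ M⁻ᵀ = (M⁻¹ Bᵢ)(M⁻¹ Bᵢ)ᵀ = Eᵢ`, and `P = M⁻ᵀ` works.
-/

open Matrix

theorem Module.Basis.sumExtend_apply_inl {K V ι : Type*} [DivisionRing K] [AddCommGroup V]
    [Module K V] {v : ι → V} (hv : LinearIndependent K v) (s : ι) :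
    sumExtend hv (.inl s) = v s := by
  simp only [sumExtend, reindex_apply, coe_extend]
  rfl

theorem LinearIndependent.exists_basis_sum_inl {K V ι κ : Type*} [DivisionRing K]
    [AddCommGroup V] [Module K V] [FiniteDimensional K V] [Finite κ] {v : ι → V}
    (hv : LinearIndependent K v) (hcard : Nat.card ι + Nat.card κ = Module.finrank K V) :
    ∃ b : Module.Basis (ι ⊕ κ) K V, ∀ s, b (.inl s) = v s := by
  let b := Module.Basis.sumExtend hv
  have : Finite (ι ⊕ Module.Basis.sumExtendIndex hv) := Module.Finite.finite_basis b
  have := Finite.sum_left (α := ι) (Module.Basis.sumExtendIndex hv)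
  have := Finite.sum_right ι (β := Module.Basis.sumExtendIndex hv)
  have hb := Module.finrank_eq_nat_card_basis b
  rw [Nat.card_sum] at hb
  obtain ⟨e⟩ : Nonempty (Module.Basis.sumExtendIndex hv ≃ κ) := Finite.card_eq.mp (by omega)
  refine ⟨b.reindex ((Equiv.refl ι).sumCongr e), fun s => ?_⟩
  simp [b, Module.Basis.sumExtend_apply_inl]

namespace Matrix

theorem exists_isUnit_col_inl_eq {K n ι κ : Type*} [Field K] [Fintype n] [DecidableEq n]
    {v : ι → n → K} (hv : LinearIndependent K v) (e : ι ⊕ κ ≃ n) :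
    ∃ M : Matrix n n K, IsUnit M ∧ ∀ s, M.col (e (.inl s)) = v s := by
  have : Finite (ι ⊕ κ) := .of_equiv _ e.symm
  have := Finite.sum_left κ (α := ι)
  have := Finite.sum_right ι (β := κ)
  have hcard : Nat.card ι + Nat.card κ = Module.finrank K (n → K) := by
    rw [← Nat.card_sum, Nat.card_congr e, Module.finrank_fintype_fun_eq_card,
      Nat.card_eq_fintype_card]
  obtain ⟨b, hb⟩ := hv.exists_basis_sum_inl hcard
  refine ⟨.of fun k l => b (e.symm l) k, ?_, fun s => ?_⟩
  · exact linearIndependent_cols_iff_isUnit.mp (b.linearIndependent.comp _ e.symm.injective)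
  · ext k
    simp [hb]

theorem nonsing_inv_mul_eq_one_submatrix {K n κ : Type*} [Field K] [Fintype n] [DecidableEq n]
    {M : Matrix n n K} (hM : IsUnit M) {B : Matrix n κ K} {f : κ → n}
    (hcol : ∀ j, M.col (f j) = B.col j) :
    M⁻¹ * B = (1 : Matrix n n K).submatrix id f := by
  have hB : B = M * (1 : Matrix n n K).submatrix id f := by
    ext k j
    simpa [mul_apply, one_apply] using (congrFun (hcol j) k).symm
  rw [hB, nonsing_inv_mul_cancel_left _ _ ((isUnit_iff_isUnit_det M).1 hM)]

theorem one_submatrix_mul_transpose {R n κ : Type*} [CommSemiring R] [Fintype κ]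
    [DecidableEq n] {f : κ → n} (hf : f.Injective) :
    (1 : Matrix n n R).submatrix id f * ((1 : Matrix n n R).submatrix id f)ᵀ =
      diagonal (Set.indicator (Set.range f) 1) := by
  ext k k'
  simp only [mul_apply, transpose_apply, submatrix_apply, id, one_apply, diagonal_apply]
  by_cases hk' : k' ∈ Set.range f
  · obtain ⟨j₀, rfl⟩ := hk'
    rw [Fintype.sum_eq_single j₀ fun j hj => by simp [hf.ne hj.symm]]
    by_cases hk : k = f j₀ <;> simp [hk]
  · rw [Finset.sum_eq_zero fun j _ => by simp [show k' ≠ f j from fun h => hk' ⟨j, h.symm⟩]]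
    split_ifs with h
    · simp [h ▸ hk']
    · rfl

end Matrix

section Blocks

variable {q n : ℕ} (r : Fin q → ℕ)

def blockStart (i : Fin q) : ℕ := ∑ l ∈ Finset.univ.filter (· < i), r l

theorem blockStart_eq_sum_castLE (i : Fin q) :
    blockStart r i = ∑ l : Fin i, r (Fin.castLE i.2.le l) := by
  refine (Finset.sum_congr ?_ fun _ _ => rfl).trans (Finset.sum_map _ (Fin.castLEEmb i.2.le) r)
  ext l
  simp only [Finset.mem_map, Finset.mem_univ, true_and, Finset.mem_filter, Fin.castLEEmb_apply]
  exact ⟨fun h => ⟨⟨l, h⟩, rfl⟩, fun ⟨a, ha⟩ => ha ▸ a.2⟩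

def blockEquiv (hm : ∑ i, r i ≤ n) : (Σ i, Fin (r i)) ⊕ Fin (n - ∑ i, r i) ≃ Fin n :=
  (finSigmaFinEquiv.sumCongr (Equiv.refl _)).trans
    (finSumFinEquiv.trans (finCongr (Nat.add_sub_cancel' hm)))

theorem blockEquiv_inl_val (hm : ∑ i, r i ≤ n) (s : Σ i, Fin (r i)) :
    (blockEquiv r hm (.inl s) : ℕ) = blockStart r s.1 + s.2 := by
  simp [blockEquiv, finSigmaFinEquiv_apply, blockStart_eq_sum_castLE]

theorem mem_range_blockEquiv_inl_iff (hm : ∑ i, r i ≤ n) (i : Fin q) (k : Fin n) :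
    k ∈ Set.range (fun j => blockEquiv r hm (.inl ⟨i, j⟩)) ↔
      blockStart r i ≤ k ∧ (k : ℕ) < blockStart r i + r i := by
  simp only [Set.mem_range, Fin.ext_iff, blockEquiv_inl_val]
  constructor
  · rintro ⟨j, hj⟩
    omega
  · rintro ⟨h₁, h₂⟩
    exact ⟨⟨k - blockStart r i, by omega⟩, by simp only; omega⟩

end Blocks

theorem stmt4_general {n q : ℕ} (A : Fin q → Matrix (Fin n) (Fin n) ℝ)
    (r : Fin q → ℕ) (B : (i : Fin q) → Matrix (Fin n) (Fin (r i)) ℝ)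
    (hB : ∀ i, A i = B i * (B i)ᵀ)
    (hm : ∑ i, r i ≤ n)
    (hspread : Module.finrank ℝ
      (Submodule.span ℝ {v : Fin n → ℝ | ∃ i : Fin q, ∃ j : Fin (r i), v = fun a => B i a j})
        = ∑ i, r i) :
    ∃ P : Matrix (Fin n) (Fin n) ℝ, IsUnit P ∧
      ∀ i : Fin q, Pᵀ * (A i) * P =
        Matrix.diagonal (fun j : Fin n =>
          if (∑ l ∈ Finset.univ.filter (· < i), r l) ≤ (j : ℕ) ∧
             (j : ℕ) < (∑ l ∈ Finset.univ.filter (· < i), r l) + r i then (1 : ℝ) else 0) := by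
  let cols : (Σ i, Fin (r i)) → Fin n → ℝ := fun s => (B s.1).col s.2
  have hcols : LinearIndependent ℝ cols := by
    have hrange : Set.range cols = {v | ∃ i : Fin q, ∃ j : Fin (r i), v = fun a => B i a j} := by
      ext v
      exact ⟨fun ⟨⟨i, j⟩, h⟩ => ⟨i, j, h.symm⟩, fun ⟨i, j, h⟩ => ⟨⟨i, j⟩, h.symm⟩⟩
    rw [linearIndependent_iff_card_eq_finrank_span, Set.finrank, hrange, hspread,
      Fintype.card_sigma]
    simp
  obtain ⟨M, hM, hMcol⟩ := exists_isUnit_col_inl_eq hcols (blockEquiv r hm)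
  refine ⟨M⁻¹ᵀ, (isUnit_transpose _).2 (isUnit_nonsing_inv_iff.2 hM), fun i => ?_⟩
  calc M⁻¹ᵀᵀ * A i * M⁻¹ᵀ = (M⁻¹ * B i) * (M⁻¹ * B i)ᵀ := by
        rw [hB, transpose_mul, transpose_transpose]
        simp only [Matrix.mul_assoc]
    _ = diagonal (Set.indicator (Set.range fun j => blockEquiv r hm (.inl ⟨i, j⟩)) 1) := by
        rw [nonsing_inv_mul_eq_one_submatrix hM fun j => hMcol ⟨i, j⟩]
        exact one_submatrix_mul_transpose
          ((blockEquiv r hm).injective.comp (Sum.inl_injective.comp sigma_mk_injective))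
    _ = _ := by
        congr 1
        ext k
        rw [Set.indicator_apply]
        exact if_congr (mem_range_blockEquiv_inl_iff r hm i k) rfl rfl

/-- Under the rank spread condition, there is an invertible `P` with
`Pᵀ Aᵢ P = Eᵢ`, `Eᵢ` the 0/1 diagonal matrix supported on the block
`Nᵢ = {m_{i-1}+1, …, m_i}`. -/
theorem stmt4 {n q : ℕ} (A : Fin q → Matrix (Fin n) (Fin n) ℝ)
    (r : Fin q → ℕ) (B : (i : Fin q) → Matrix (Fin n) (Fin (r i)) ℝ)
    (hApsd : ∀ i, (A i).PosSemidef)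
    (hrank : ∀ i, (A i).rank = r i)
    (hB : ∀ i, A i = B i * (B i)ᵀ)
    (hm : ∑ i, r i ≤ n)
    (hspread : Module.finrank ℝ
      (Submodule.span ℝ {v : Fin n → ℝ | ∃ i : Fin q, ∃ j : Fin (r i), v = fun a => B i a j})
        = ∑ i, r i) :
    ∃ P : Matrix (Fin n) (Fin n) ℝ, IsUnit P ∧
      ∀ i : Fin q, Pᵀ * (A i) * P =
        Matrix.diagonal (fun j : Fin n =>
          if (∑ l ∈ Finset.univ.filter (· < i), r l) ≤ (j : ℕ) ∧
             (j : ℕ) < (∑ l ∈ Finset.univ.filter (· < i), r l) + r i then (1 : ℝ) else 0) :=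
  stmt4_general A r B hB hm hspread
end

section
/- With the notation above, the Hessian of J_k at a critical point x is block diagonal with, for each i, block ρᵢ(x)Eᵢ + 2(Eᵢx̂)(Eᵢx̂)ᵀ in vectorized coordinates; at a critical point where the block Eᵢx = 0, the corresponding Hessian block is −yᵢEᵢ, which is negative definite on the coordinates indexed by Nᵢ. -/
open Matrix

/-- Residual `ρᵢ(x) = Σ_{j ∈ Mᵢ} xⱼ² − yᵢ` in vectorized coordinates. -/
def stmt7Rho {p q : ℕ} (M : Fin q → Finset (Fin p)) (y : Fin q → ℝ)
    (i : Fin q) (x : Fin p → ℝ) : ℝ :=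
  (∑ j ∈ M i, (x j)^2) - y i

/-- `J_k(x) = (1/4) Σᵢ ρᵢ(x)²` in vectorized coordinates. -/
noncomputable def stmt7J {p q : ℕ} (M : Fin q → Finset (Fin p)) (y : Fin q → ℝ)
    (x : Fin p → ℝ) : ℝ :=
  (1/4 : ℝ) * ∑ i, (stmt7Rho M y i x)^2

/-- The claimed block-diagonal Hessian, with `i`-th block `ρᵢ(x)Eᵢ + 2(Eᵢx)(Eᵢx)ᵀ`. -/
def stmt7Hess {p q : ℕ} (M : Fin q → Finset (Fin p)) (y : Fin q → ℝ)
    (x : Fin p → ℝ) : Matrix (Fin p) (Fin p) ℝ :=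
  Matrix.of fun j l => ∑ i,
    if j ∈ M i ∧ l ∈ M i then
      (stmt7Rho M y i x) * (if j = l then 1 else 0) + 2 * x j * x l
    else 0

/-! Along a line `x + s • v` each residual is a quadratic polynomial in `s`,
`ρᵢ(x) + 2⟨Eᵢx, v⟩ s + |Eᵢv|² s²`, so the second derivative of `J_k` at `s = 0` is
`Σᵢ (ρᵢ(x) |Eᵢv|² + 2⟨Eᵢx, v⟩²)`, which is the quadratic form of the block matrix. Since the blocks
are disjoint, for `v` supported in the `i`-th block only the `i`-th term survives; if `x` vanishes
on that block then `ρᵢ(x) = -yᵢ` and `⟨Eᵢx, v⟩ = 0`, leaving `-yᵢ |v|² < 0`. -/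

lemma iteratedDeriv_quadratic_zero (a b c : ℝ) (n : ℕ) :
    iteratedDeriv n (fun t : ℝ => a + b * t + c * t ^ 2) 0
      = if n = 0 then a else if n = 1 then b else if n = 2 then 2 * c else 0 := by
  rw [iteratedDeriv_fun_add (by fun_prop) (by fun_prop),
    iteratedDeriv_fun_add (by fun_prop) (by fun_prop), iteratedDeriv_const_mul_field,
    iteratedDeriv_const_mul_field, iteratedDeriv_fun_id_zero, iteratedDeriv_fun_pow_zero]
  rcases n with _ | _ | _ | n <;> simp [iteratedDeriv_const, mul_comm]

lemma iteratedDeriv_two_sq_quadratic_zero (a b c : ℝ) :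
    iteratedDeriv 2 (fun t : ℝ => (a + b * t + c * t ^ 2) ^ 2) 0 = 2 * b ^ 2 + 4 * a * c := by
  simp only [sq (_ + _)]
  rw [iteratedDeriv_fun_mul (by fun_prop) (by fun_prop)]
  simp [Finset.sum_range_succ, iteratedDeriv_quadratic_zero]
  ring

lemma sum_sq_pos_of_ne_zero {ι : Type*} {s : Finset ι} {v : ι → ℝ} (hv : v ≠ 0)
    (hsupp : ∀ j ∉ s, v j = 0) : 0 < ∑ j ∈ s, v j ^ 2 := by
  obtain ⟨j, hj⟩ := Function.ne_iff.mp hv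
  have hjs : j ∈ s := by_contra fun h => hj (hsupp j h)
  exact Finset.sum_pos' (fun _ _ => sq_nonneg _) ⟨j, hjs, pow_two_pos_of_ne_zero hj⟩

section

open Function

variable {p q : ℕ} (M : Fin q → Finset (Fin p)) (y : Fin q → ℝ)

lemma stmt7Rho_add_smul (i : Fin q) (x v : Fin p → ℝ) (s : ℝ) :
    stmt7Rho M y i (x + s • v) = stmt7Rho M y i x + 2 * (∑ j ∈ M i, x j * v j) * s
      + (∑ j ∈ M i, v j ^ 2) * s ^ 2 := by
  have hsq (j : Fin p) : (x j + s * v j) ^ 2 = x j ^ 2 + 2 * (x j * v j) * s + v j ^ 2 * s ^ 2 := by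
    ring
  simp only [stmt7Rho, Pi.add_apply, Pi.smul_apply, smul_eq_mul, hsq, Finset.sum_add_distrib,
    ← Finset.sum_mul, ← Finset.mul_sum]
  ring

lemma stmt7Rho_eq_neg_of_block_eq_zero {i : Fin q} {x : Fin p → ℝ}
    (hx : ∀ j ∈ M i, x j = 0) : stmt7Rho M y i x = -y i := by
  have hsum : ∑ j ∈ M i, x j ^ 2 = 0 := Finset.sum_eq_zero fun j hj => by simp [hx j hj]
  simp [stmt7Rho, hsum]

theorem iteratedDeriv_two_stmt7J_add_smul (x v : Fin p → ℝ) :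
    iteratedDeriv 2 (fun s : ℝ => stmt7J M y (x + s • v)) 0
      = ∑ i, (stmt7Rho M y i x * ∑ j ∈ M i, v j ^ 2 + 2 * (∑ j ∈ M i, x j * v j) ^ 2) := by
  simp only [stmt7J, stmt7Rho_add_smul]
  rw [iteratedDeriv_const_mul_field, iteratedDeriv_fun_sum fun i _ => by fun_prop]
  simp only [iteratedDeriv_two_sq_quadratic_zero]
  rw [Finset.mul_sum]
  exact Finset.sum_congr rfl fun i _ => by ring

theorem dotProduct_stmt7Hess_mulVec (x v : Fin p → ℝ) :
    v ⬝ᵥ stmt7Hess M y x *ᵥ v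
      = ∑ i, (stmt7Rho M y i x * ∑ j ∈ M i, v j ^ 2 + 2 * (∑ j ∈ M i, x j * v j) ^ 2) := by
  have block (i : Fin q) : ∑ j, ∑ l, v j * ((if j ∈ M i ∧ l ∈ M i then
        stmt7Rho M y i x * (if j = l then 1 else 0) + 2 * x j * x l else 0) * v l)
      = stmt7Rho M y i x * ∑ j ∈ M i, v j ^ 2 + 2 * (∑ j ∈ M i, x j * v j) ^ 2 := by
    simp only [ite_and, ite_mul, zero_mul, mul_ite, mul_zero, Finset.sum_ite_irrel,
      Finset.sum_const_zero, Finset.sum_ite_mem, Finset.univ_inter, Finset.inter_self, mul_add,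
      add_mul, mul_one, Finset.sum_add_distrib, Finset.sum_ite_eq, sq, Finset.mul_sum,
      Finset.sum_mul]
    exact congrArg₂ _ (Finset.sum_congr rfl fun j _ => by ring)
      (Finset.sum_congr rfl fun j _ => Finset.sum_congr rfl fun l _ => by ring)
  rw [← Finset.sum_congr rfl fun i _ => block i, Finset.sum_comm]
  simp only [dotProduct, mulVec, stmt7Hess, of_apply, Finset.sum_mul, Finset.mul_sum]
  exact Finset.sum_congr rfl fun j _ => Finset.sum_comm

lemma stmt7Hess_apply_eq_zero (x : Fin p → ℝ) {j l : Fin p} (h : ∀ i, ¬(j ∈ M i ∧ l ∈ M i)) :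
    stmt7Hess M y x j l = 0 := by
  simp only [stmt7Hess, of_apply]
  exact Finset.sum_eq_zero fun i _ => if_neg (h i)

variable {M}

lemma stmt7Hess_apply_of_mem (hdisj : Pairwise (Disjoint on M)) (x : Fin p → ℝ) {i : Fin q}
    {j l : Fin p} (hj : j ∈ M i) (hl : l ∈ M i) :
    stmt7Hess M y x j l = stmt7Rho M y i x * (if j = l then 1 else 0) + 2 * x j * x l := by
  simp only [stmt7Hess, of_apply]
  rw [Finset.sum_eq_single i (fun b _ hb => if_neg fun h => ?_) (by simp), if_pos ⟨hj, hl⟩]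
  exact Finset.disjoint_left.mp (hdisj hb) h.1 hj

lemma dotProduct_stmt7Hess_mulVec_of_support (hdisj : Pairwise (Disjoint on M))
    (x : Fin p → ℝ) {i : Fin q} {v : Fin p → ℝ} (hv : ∀ j ∉ M i, v j = 0) :
    v ⬝ᵥ stmt7Hess M y x *ᵥ v
      = stmt7Rho M y i x * ∑ j ∈ M i, v j ^ 2 + 2 * (∑ j ∈ M i, x j * v j) ^ 2 := by
  rw [dotProduct_stmt7Hess_mulVec, Finset.sum_eq_single i _ (by simp)]
  intro b _ hb
  have hvb : ∀ j ∈ M b, v j = 0 := fun j hj =>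
    hv j fun hji => Finset.disjoint_left.mp (hdisj hb) hj hji
  have hsq : ∑ j ∈ M b, v j ^ 2 = 0 := Finset.sum_eq_zero fun j hj => by simp [hvb j hj]
  have hmul : ∑ j ∈ M b, x j * v j = 0 := Finset.sum_eq_zero fun j hj => by simp [hvb j hj]
  simp [hsq, hmul]

end

/-- The Hessian of `J_k` is block diagonal with blocks
`ρᵢ(x)Eᵢ + 2(Eᵢx)(Eᵢx)ᵀ`; at a critical point where the `i`-th block of `x` vanishes, the
corresponding block is `−yᵢEᵢ`, negative definite on the coordinates indexed by `Nᵢ`. -/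
theorem stmt7 {p q : ℕ} (M : Fin q → Finset (Fin p))
    (hdisj : ∀ i j : Fin q, i ≠ j → Disjoint (M i) (M j))
    (y : Fin q → ℝ) (hy : ∀ i, 0 < y i) :
    -- the second directional derivative of `J_k` is the quadratic form of `stmt7Hess`
    (∀ x v : Fin p → ℝ,
      iteratedDeriv 2 (fun s : ℝ => stmt7J M y (x + s • v)) 0
        = v ⬝ᵥ (stmt7Hess M y x) *ᵥ v) ∧
    -- block diagonality: entries outside the diagonal blocks vanish
    (∀ x : Fin p → ℝ, ∀ j l : Fin p, (∀ i, ¬(j ∈ M i ∧ l ∈ M i)) → stmt7Hess M y x j l = 0) ∧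
    -- at a critical point whose `i`-th block vanishes, the `i`-th Hessian block is `−yᵢEᵢ`,
    -- which is negative definite on the coordinates indexed by `M i`
    (∀ x : Fin p → ℝ,
      (∀ i : Fin q, ∀ j ∈ M i, stmt7Rho M y i x * x j = 0) →
      ∀ i : Fin q, (∀ j ∈ M i, x j = 0) →
        (∀ j l : Fin p, j ∈ M i → l ∈ M i →
          stmt7Hess M y x j l = if j = l then -(y i) else 0) ∧
        (∀ v : Fin p → ℝ, v ≠ 0 → (∀ j, j ∉ M i → v j = 0) →
          v ⬝ᵥ (stmt7Hess M y x) *ᵥ v < 0)) := by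
  refine ⟨fun x v => by rw [iteratedDeriv_two_stmt7J_add_smul, dotProduct_stmt7Hess_mulVec],
    fun x j l h => stmt7Hess_apply_eq_zero M y x h, fun x _ i hxi => ⟨?_, ?_⟩⟩
  · intro j l hj hl
    rw [stmt7Hess_apply_of_mem y hdisj x hj hl,
      stmt7Rho_eq_neg_of_block_eq_zero M y hxi, hxi j hj]
    split_ifs <;> ring
  · intro v hv hsupp
    have hxv : ∑ j ∈ M i, x j * v j = 0 := Finset.sum_eq_zero fun j hj => by simp [hxi j hj]
    rw [dotProduct_stmt7Hess_mulVec_of_support y hdisj x hsupp,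
      stmt7Rho_eq_neg_of_block_eq_zero M y hxi, hxv, zero_pow two_ne_zero, mul_zero, add_zero]
    exact mul_neg_of_neg_of_pos (neg_lt_zero.mpr (hy i)) (sum_sq_pos_of_ne_zero hv hsupp)
end

section
/- Let A₁,…,A_q be commuting generalized projection matrices (Aᵢ² = γᵢAᵢ, γᵢ > 0, Aᵢ psd) satisfying the rank spread condition, with Aᵢ = BᵢBᵢᵀ. Then Bᵢᵀ B_j = 0 for i ≠ j; consequently the matrix Q = BᵀB is diagonal with equal diagonal entries within each block Nᵢ. -/
open Matrix

/-- For commuting generalized projection matrices `Aᵢ = BᵢBᵢᵀ` satisfying the rank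
spread condition, where each `Bᵢ` has orthogonal columns of equal norm, one has `Bᵢᵀ Bⱼ = 0`
for `i ≠ j`; consequently the Gram matrix `Q = BᵀB` of the stacked columns is diagonal with
equal diagonal entries within each block. -/
theorem stmt8 {n q : ℕ} (A : Fin q → Matrix (Fin n) (Fin n) ℝ)
    (r : Fin q → ℕ) (B : (i : Fin q) → Matrix (Fin n) (Fin (r i)) ℝ)
    (γ : Fin q → ℝ) (hγ : ∀ i, 0 < γ i)
    (hApsd : ∀ i, (A i).PosSemidef)
    (hAB : ∀ i, A i = B i * (B i)ᵀ)
    (hproj : ∀ i, (A i) * (A i) = γ i • (A i))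
    (hcomm : ∀ i j, (A i) * (A j) = (A j) * (A i))
    (horth : ∀ i, (B i)ᵀ * (B i) = γ i • (1 : Matrix (Fin (r i)) (Fin (r i)) ℝ))
    (hm : ∑ i, r i ≤ n)
    (hspread : LinearIndependent ℝ
      (fun p : (i : Fin q) × Fin (r i) => fun a : Fin n => B p.1 a p.2)) :
    (∀ i j : Fin q, i ≠ j → (B i)ᵀ * (B j) = 0) ∧
    (∀ p p' : (i : Fin q) × Fin (r i), p ≠ p' →
      (fun p p' : (i : Fin q) × Fin (r i) =>
        (fun a => B p.1 a p.2) ⬝ᵥ (fun a => B p'.1 a p'.2)) p p' = 0) ∧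
    (∀ i : Fin q, ∀ j j' : Fin (r i),
      (fun a => B i a j) ⬝ᵥ (fun a => B i a j) = (fun a => B i a j') ⬝ᵥ (fun a => B i a j')) := by
  set f : (i : Fin q) × Fin (r i) → (Fin n → ℝ) := fun p => fun a : Fin n => B p.1 a p.2 with hf
  -- membership of B i *ᵥ y in the span of the i-th block of columns
  have hmem : ∀ (i : Fin q) (y : Fin (r i) → ℝ),
      (B i) *ᵥ y ∈ Submodule.span ℝ (f '' {p : (i : Fin q) × Fin (r i) | p.1 = i}) := by
    intro i y
    have : (B i) *ᵥ y = ∑ k : Fin (r i), y k • f ⟨i, k⟩ := by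
      funext a
      simp [Matrix.mulVec, dotProduct, hf, Finset.sum_apply, mul_comm]
    rw [this]
    exact Submodule.sum_mem _ fun k _ => Submodule.smul_mem _ _
      (Submodule.subset_span ⟨⟨i, k⟩, rfl, rfl⟩)
  -- key: A i * A j = 0 for i ≠ j
  have hAA : ∀ i j : Fin q, i ≠ j → A i * A j = 0 := by
    intro i j hij
    have hdisj : Disjoint (Submodule.span ℝ (f '' {p : (i : Fin q) × Fin (r i) | p.1 = i}))
        (Submodule.span ℝ (f '' {p : (i : Fin q) × Fin (r i) | p.1 = j})) := by
      apply hspread.disjoint_span_image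
      rw [Set.disjoint_left]
      rintro ⟨a, b⟩ ha hb
      exact hij (ha.symm.trans hb)
    have hx : ∀ x : Fin n → ℝ, (A i * A j) *ᵥ x = 0 := by
      intro x
      have h1 : (A i * A j) *ᵥ x ∈
          Submodule.span ℝ (f '' {p : (i : Fin q) × Fin (r i) | p.1 = i}) := by
        have : (A i * A j) *ᵥ x = (B i) *ᵥ ((B i)ᵀ *ᵥ ((A j) *ᵥ x)) := by
          rw [hAB i, ← Matrix.mulVec_mulVec, ← Matrix.mulVec_mulVec]
        rw [this]; exact hmem i _
      have h2 : (A i * A j) *ᵥ x ∈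
          Submodule.span ℝ (f '' {p : (i : Fin q) × Fin (r i) | p.1 = j}) := by
        have : (A i * A j) *ᵥ x = (B j) *ᵥ ((B j)ᵀ *ᵥ ((A i) *ᵥ x)) := by
          rw [hcomm i j, hAB j, ← Matrix.mulVec_mulVec, ← Matrix.mulVec_mulVec]
        rw [this]; exact hmem j _
      exact Submodule.disjoint_def.1 hdisj _ h1 h2
    ext a b
    have := congrFun (hx (Pi.single b 1)) a
    simpa [Matrix.mulVec_single] using this
  -- part 1
  have key : ∀ i j : Fin q, i ≠ j → (B i)ᵀ * (B j) = 0 := by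
    intro i j hij
    have h0 : (B i)ᵀ * (A i * A j) * (B j) = 0 := by
      rw [hAA i j hij]; simp
    have h1 : (B i)ᵀ * (A i * A j) * (B j) = (γ i * γ j) • ((B i)ᵀ * (B j)) := by
      rw [hAB i, hAB j]
      calc (B i)ᵀ * (B i * (B i)ᵀ * (B j * (B j)ᵀ)) * B j
          = ((B i)ᵀ * B i) * ((B i)ᵀ * B j) * ((B j)ᵀ * B j) := by
            simp only [Matrix.mul_assoc]
        _ = (γ i • (1 : Matrix (Fin (r i)) (Fin (r i)) ℝ)) * ((B i)ᵀ * B j) *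
              (γ j • (1 : Matrix (Fin (r j)) (Fin (r j)) ℝ)) := by rw [horth i, horth j]
        _ = (γ i * γ j) • ((B i)ᵀ * (B j)) := by
            simp [Matrix.smul_mul, Matrix.mul_smul, smul_smul, mul_comm]
    rw [h0] at h1
    have hne : γ i * γ j ≠ 0 := ne_of_gt (mul_pos (hγ i) (hγ j))
    rcases smul_eq_zero.mp h1.symm with h | h
    · exact absurd h hne
    · exact h
  refine ⟨key, ?_, ?_⟩
  · rintro ⟨i, k⟩ ⟨i', k'⟩ hne
    by_cases h : i = i'
    · subst h
      have hk : k ≠ k' := by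
        intro hkk; exact hne (by simp [hkk])
      have := congrFun (congrFun (horth i) k) k'
      simp only [Matrix.mul_apply, Matrix.transpose_apply, Matrix.smul_apply,
        Matrix.one_apply, hk, if_neg hk, smul_eq_mul, mul_zero] at this
      simpa [dotProduct] using this
    · have := congrFun (congrFun (key i i' h) k) k'
      simp only [Matrix.mul_apply, Matrix.transpose_apply, Matrix.zero_apply] at this
      simpa [dotProduct] using this
  · intro i j j'
    have h1 := congrFun (congrFun (horth i) j) j
    have h2 := congrFun (congrFun (horth i) j') j'
    simp only [Matrix.mul_apply, Matrix.transpose_apply, Matrix.smul_apply,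
      Matrix.one_apply_eq, smul_eq_mul, mul_one] at h1 h2
    simp only [dotProduct]
    rw [h1, h2]
end

section
/- Let Q = α vvᵀ + β I with α, β > 0 and v ∈ ℝ^m, and let D(x) = Σᵢ ρᵢ(x)Eᵢ with ρᵢ(x) = xᵀEᵢx − yᵢ. Then the linear subspace Λ_v = {Λv : Λ = Σᵢ λᵢEᵢ, λᵢ ∈ ℝ} is invariant under the flow dx/dt = −Q D(x) x on ℝ^m. -/
open Matrix

lemma sum_mulVec_aux {m q : ℕ} (A : Fin q → Matrix (Fin m) (Fin m) ℝ) (u : Fin m → ℝ) :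
    (∑ i, A i) *ᵥ u = ∑ i, A i *ᵥ u := by
  ext j
  simp only [mulVec, dotProduct, Finset.sum_apply, Matrix.sum_apply, Finset.sum_mul]
  rw [Finset.sum_comm]

/-- The subspace `Λ_v = {Λv : Λ = Σᵢ λᵢEᵢ}` is invariant under the flow
`dx/dt = −Q D(x) x` with `Q = αvvᵀ + βI` and `D(x) = Σᵢ ρᵢ(x)Eᵢ`: the vector field lies in
`Λ_v` at every point of `Λ_v`. -/
theorem stmt9 {m q : ℕ} (N : Fin q → Finset (Fin m))
    (hdisj : ∀ i j : Fin q, i ≠ j → Disjoint (N i) (N j))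
    (hcover : Finset.univ.biUnion N = (Finset.univ : Finset (Fin m)))
    (E : Fin q → Matrix (Fin m) (Fin m) ℝ)
    (hE : ∀ i, E i = Matrix.diagonal (fun j => if j ∈ N i then (1 : ℝ) else 0))
    (α β : ℝ) (hα : 0 < α) (hβ : 0 < β) (v : Fin m → ℝ) (y : Fin q → ℝ)
    (Q : Matrix (Fin m) (Fin m) ℝ)
    (hQ : Q = α • Matrix.vecMulVec v v + β • (1 : Matrix (Fin m) (Fin m) ℝ)) :
    ∀ x : Fin m → ℝ,
      x ∈ {z : Fin m → ℝ | ∃ lam : Fin q → ℝ, z = ∑ i, lam i • (E i) *ᵥ v} →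
      -(Q *ᵥ ((∑ i, (x ⬝ᵥ (E i) *ᵥ x - y i) • E i) *ᵥ x))
        ∈ {z : Fin m → ℝ | ∃ lam : Fin q → ℝ, z = ∑ i, lam i • (E i) *ᵥ v} := by
  intro x hx
  obtain ⟨lam, hx⟩ := hx
  set ρ : Fin q → ℝ := fun i => x ⬝ᵥ (E i) *ᵥ x - y i with hρ
  set w : Fin m → ℝ := (∑ i, ρ i • E i) *ᵥ x with hw
  set c : ℝ := v ⬝ᵥ w with hc
  refine ⟨fun i => -(α * c + β * (ρ i * lam i)), ?_⟩
  have hEapp : ∀ (i : Fin q) (u : Fin m → ℝ) (j : Fin m),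
      (E i *ᵥ u) j = if j ∈ N i then u j else 0 := by
    intro i u j
    rw [hE, mulVec_diagonal]
    by_cases h : j ∈ N i <;> simp [h]
  funext j
  -- find the unique block containing j
  have hmem : ∃ i, j ∈ N i := by
    have : j ∈ Finset.univ.biUnion N := hcover ▸ Finset.mem_univ j
    simpa using this
  obtain ⟨i₀, hi₀⟩ := hmem
  have huniq : ∀ i, i ≠ i₀ → j ∉ N i := by
    intro i hne hji
    exact (Finset.disjoint_left.mp (hdisj i i₀ hne)) hji hi₀
  have hpick : ∀ f : Fin q → ℝ, (∑ i, if j ∈ N i then f i else 0) = f i₀ := by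
    intro f
    rw [Finset.sum_eq_single i₀]
    · simp [hi₀]
    · intro i _ hne
      simp [huniq i hne]
    · simp
  have hxj : x j = lam i₀ * v j := by
    rw [hx, Finset.sum_apply]
    simp only [Pi.smul_apply, smul_eq_mul, hEapp]
    rw [← hpick fun i => lam i * v j]
    congr 1; funext i
    by_cases h : j ∈ N i <;> simp [h]
  have hwj : w j = ρ i₀ * (lam i₀ * v j) := by
    rw [hw, sum_mulVec_aux, Finset.sum_apply]
    simp only [Pi.smul_apply, smul_eq_mul, smul_mulVec]
    simp only [hEapp]
    simp only [mul_ite, mul_zero]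
    rw [hpick, hxj]
  have hQw : (Q *ᵥ w) j = α * (c * v j) + β * w j := by
    rw [hQ, add_mulVec, smul_mulVec, smul_mulVec, one_mulVec]
    have : vecMulVec v v *ᵥ w = (v ⬝ᵥ w) • v := by
      ext k
      simp only [vecMulVec, mulVec, dotProduct, of_apply, Pi.smul_apply, smul_eq_mul]
      rw [Finset.sum_mul]
      exact Finset.sum_congr rfl fun i _ => by ring
    rw [this]
    simp [hc, mul_comm]
  -- now compute both sides
  have hRHS : (∑ i, (fun i => -(α * c + β * (ρ i * lam i))) i • (E i) *ᵥ v) j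
      = -(α * c + β * (ρ i₀ * lam i₀)) * v j := by
    rw [Finset.sum_apply]
    simp only [Pi.smul_apply, smul_eq_mul, hEapp]
    rw [← hpick fun i => -(α * c + β * (ρ i * lam i)) * v j]
    congr 1; funext i
    by_cases h : j ∈ N i <;> simp [h]
  rw [Pi.neg_apply, hQw, hRHS, hwj]
  ring
end

section
/- Under the tame spectrum assumption (Q = αvvᵀ + βI with α,β > 0 and Eᵢv ≠ 0 for all i) and yᵢ > 0, the intersection Λ_v ∩ {x : xᵀEᵢx = yᵢ for all i} consists of exactly 2^q points, namely x = Σᵢ λᵢEᵢv with λᵢ = ±√yᵢ/‖Eᵢv‖, and this intersection is transversal. -/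
open Matrix

/-- Under the tame spectrum assumption, `Λ_v` meets the feasible set
`{x : xᵀEᵢx = yᵢ ∀i}` in exactly the `2^q` points `Σᵢ (±√yᵢ/‖Eᵢv‖) Eᵢv`, and the
intersection is transversal. -/
theorem stmt10 {m q : ℕ} (N : Fin q → Finset (Fin m))
    (hdisj : ∀ i j : Fin q, i ≠ j → Disjoint (N i) (N j))
    (hcover : Finset.univ.biUnion N = (Finset.univ : Finset (Fin m)))
    (E : Fin q → Matrix (Fin m) (Fin m) ℝ)
    (hE : ∀ i, E i = Matrix.diagonal (fun j => if j ∈ N i then (1 : ℝ) else 0))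
    (v : Fin m → ℝ) (hv : ∀ i, (E i) *ᵥ v ≠ 0)
    (y : Fin q → ℝ) (hy : ∀ i, 0 < y i) :
    -- description of the intersection
    ({x : Fin m → ℝ | (∃ lam : Fin q → ℝ, x = ∑ i, lam i • (E i) *ᵥ v) ∧
        ∀ i, x ⬝ᵥ (E i) *ᵥ x = y i}
      = {x : Fin m → ℝ | ∃ ε : Fin q → ℝ, (∀ i, ε i = 1 ∨ ε i = -1) ∧
          x = ∑ i, (ε i * Real.sqrt (y i) /
            Real.sqrt (((E i) *ᵥ v) ⬝ᵥ ((E i) *ᵥ v))) • (E i) *ᵥ v}) ∧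
    -- cardinality 2^q
    Set.ncard {x : Fin m → ℝ | (∃ lam : Fin q → ℝ, x = ∑ i, lam i • (E i) *ᵥ v) ∧
        ∀ i, x ⬝ᵥ (E i) *ᵥ x = y i} = 2 ^ q ∧
    -- transversality: at every intersection point, `Λ_v` plus the tangent space of the
    -- feasible set spans the whole space
    (∀ x : Fin m → ℝ,
      (∃ lam : Fin q → ℝ, x = ∑ i, lam i • (E i) *ᵥ v) → (∀ i, x ⬝ᵥ (E i) *ᵥ x = y i) →
      ∀ u : Fin m → ℝ, ∃ a b : Fin m → ℝ,
        (∃ lam : Fin q → ℝ, a = ∑ i, lam i • (E i) *ᵥ v) ∧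
        (∀ i, b ⬝ᵥ (E i) *ᵥ x = 0) ∧ u = a + b) := by
  classical
  have hmul : ∀ (i : Fin q) (z : Fin m → ℝ) (k : Fin m),
      ((E i) *ᵥ z) k = (if k ∈ N i then 1 else 0) * z k := by
    intro i z k
    rw [hE]
    simp [Matrix.mulVec_diagonal]
  -- orthogonality of the vectors `E i *ᵥ v`
  have hwdot : ∀ i j : Fin q, i ≠ j → ((E i) *ᵥ v) ⬝ᵥ ((E j) *ᵥ v) = 0 := by
    intro i j hij
    simp only [dotProduct, hmul]
    refine Finset.sum_eq_zero fun k _ => ?_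
    by_cases h1 : k ∈ N i
    · have h2 : k ∉ N j := Finset.disjoint_left.mp (hdisj i j hij) h1
      simp [h1, h2]
    · simp [h1]
  have hdpos : ∀ i : Fin q, 0 < ((E i) *ᵥ v) ⬝ᵥ ((E i) *ᵥ v) := by
    intro i
    have h0 : ((E i) *ᵥ v) ⬝ᵥ ((E i) *ᵥ v) ≠ 0 :=
      fun h => (hv i) (dotProduct_self_eq_zero.mp h)
    have hnn : 0 ≤ ((E i) *ᵥ v) ⬝ᵥ ((E i) *ᵥ v) := by
      simp only [dotProduct]
      exact Finset.sum_nonneg fun k _ => mul_self_nonneg _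
    exact lt_of_le_of_ne hnn (Ne.symm h0)
  -- dot product of a combination with `E j *ᵥ v`
  have hcomb : ∀ (c : Fin q → ℝ) (j : Fin q),
      (∑ i, c i • (E i) *ᵥ v) ⬝ᵥ ((E j) *ᵥ v)
        = c j * (((E j) *ᵥ v) ⬝ᵥ ((E j) *ᵥ v)) := by
    intro c j
    have h1 : (∑ i, c i • (E i) *ᵥ v) ⬝ᵥ ((E j) *ᵥ v)
        = ∑ i, c i * (((E i) *ᵥ v) ⬝ᵥ ((E j) *ᵥ v)) := by
      simp only [dotProduct, Finset.sum_apply, Pi.smul_apply, smul_eq_mul,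
        Finset.sum_mul]
      rw [Finset.sum_comm]
      exact Finset.sum_congr rfl fun i _ => by
        rw [Finset.mul_sum]
        exact Finset.sum_congr rfl fun k _ => by ring
    rw [h1, Finset.sum_eq_single j (fun i _ hij => by rw [hwdot i j hij, mul_zero])
      (fun h => absurd (Finset.mem_univ j) h)]
  -- `E j` applied to a combination
  have hEx : ∀ (c : Fin q → ℝ) (j : Fin q),
      (E j) *ᵥ (∑ i, c i • (E i) *ᵥ v) = c j • (E j) *ᵥ v := by
    intro c j
    funext k
    rw [hmul]
    simp only [Finset.sum_apply, Pi.smul_apply, smul_eq_mul, hmul, Finset.mul_sum]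
    rw [Finset.sum_eq_single j]
    · by_cases h : k ∈ N j <;> simp [h]
    · intro i _ hij
      by_cases h1 : k ∈ N i
      · have h2 : k ∉ N j := Finset.disjoint_left.mp (hdisj i j hij) h1
        simp [h1, h2]
      · simp [h1]
    · intro h; exact absurd (Finset.mem_univ j) h
  -- the quadratic form at a combination
  have hquad : ∀ (c : Fin q → ℝ) (i : Fin q),
      (∑ j, c j • (E j) *ᵥ v) ⬝ᵥ ((E i) *ᵥ (∑ j, c j • (E j) *ᵥ v))
        = c i * c i * (((E i) *ᵥ v) ⬝ᵥ ((E i) *ᵥ v)) := by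
    intro c i
    rw [hEx c i, dotProduct_smul, smul_eq_mul, hcomb]
    ring
  have hsqrtd : ∀ i : Fin q, 0 < Real.sqrt (((E i) *ᵥ v) ⬝ᵥ ((E i) *ᵥ v)) :=
    fun i => Real.sqrt_pos.mpr (hdpos i)
  -- part 1 : the set equality
  have part1 : ({x : Fin m → ℝ | (∃ lam : Fin q → ℝ, x = ∑ i, lam i • (E i) *ᵥ v) ∧
        ∀ i, x ⬝ᵥ (E i) *ᵥ x = y i}
      = {x : Fin m → ℝ | ∃ ε : Fin q → ℝ, (∀ i, ε i = 1 ∨ ε i = -1) ∧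
          x = ∑ i, (ε i * Real.sqrt (y i) /
            Real.sqrt (((E i) *ᵥ v) ⬝ᵥ ((E i) *ᵥ v))) • (E i) *ᵥ v}) := by
    ext x
    simp only [Set.mem_setOf_eq]
    constructor
    · rintro ⟨⟨lam, rfl⟩, hcon⟩
      refine ⟨fun i => if 0 ≤ lam i then 1 else -1,
        fun i => by by_cases h : 0 ≤ lam i <;> simp [h], ?_⟩
      refine Finset.sum_congr rfl fun i _ => ?_
      have h1 : lam i * lam i * (((E i) *ᵥ v) ⬝ᵥ ((E i) *ᵥ v)) = y i :=
        (hquad lam i).symm.trans (hcon i)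
      have hdne : (((E i) *ᵥ v) ⬝ᵥ ((E i) *ᵥ v)) ≠ 0 := ne_of_gt (hdpos i)
      have hsq : lam i ^ 2 = y i / (((E i) *ᵥ v) ⬝ᵥ ((E i) *ᵥ v)) := by
        field_simp
        linear_combination h1
      have h2 : |lam i| = Real.sqrt (y i) /
          Real.sqrt (((E i) *ᵥ v) ⬝ᵥ ((E i) *ᵥ v)) := by
        rw [← Real.sqrt_sq_eq_abs, hsq, Real.sqrt_div (hy i).le]
      congr 1
      dsimp only
      by_cases hsgn : 0 ≤ lam i
      · rw [if_pos hsgn, one_mul, ← h2]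
        exact (abs_of_nonneg hsgn).symm
      · rw [if_neg hsgn, neg_one_mul, neg_div]
        have h3 : -lam i = Real.sqrt (y i) /
            Real.sqrt (((E i) *ᵥ v) ⬝ᵥ ((E i) *ᵥ v)) := by
          rw [← h2, abs_of_neg (lt_of_not_ge hsgn)]
        rw [← h3, neg_neg]
    · rintro ⟨ε, hε, rfl⟩
      refine ⟨⟨fun i => ε i * Real.sqrt (y i) /
        Real.sqrt (((E i) *ᵥ v) ⬝ᵥ ((E i) *ᵥ v)), rfl⟩, fun i => ?_⟩
      refine (hquad (fun i => ε i * Real.sqrt (y i) /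
        Real.sqrt (((E i) *ᵥ v) ⬝ᵥ ((E i) *ᵥ v))) i).trans ?_
      have hε2 : ε i * ε i = 1 := by rcases hε i with h | h <;> rw [h] <;> norm_num
      have hyy : Real.sqrt (y i) * Real.sqrt (y i) = y i :=
        Real.mul_self_sqrt (hy i).le
      have hdd : Real.sqrt (((E i) *ᵥ v) ⬝ᵥ ((E i) *ᵥ v)) *
          Real.sqrt (((E i) *ᵥ v) ⬝ᵥ ((E i) *ᵥ v)) = ((E i) *ᵥ v) ⬝ᵥ ((E i) *ᵥ v) :=
        Real.mul_self_sqrt (hdpos i).le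
      have hdne : (((E i) *ᵥ v) ⬝ᵥ ((E i) *ᵥ v)) ≠ 0 := ne_of_gt (hdpos i)
      rw [div_mul_div_comm,
        show ε i * Real.sqrt (y i) * (ε i * Real.sqrt (y i)) =
          (ε i * ε i) * (Real.sqrt (y i) * Real.sqrt (y i)) by ring,
        hε2, hyy, hdd, one_mul, div_mul_cancel₀ _ hdne]
  refine ⟨part1, ?_, ?_⟩
  · -- cardinality
    rw [part1]
    set G : (Fin q → Bool) → (Fin m → ℝ) :=
      fun f => ∑ i, ((if f i then (1:ℝ) else -1) * Real.sqrt (y i) /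
        Real.sqrt (((E i) *ᵥ v) ⬝ᵥ ((E i) *ᵥ v))) • (E i) *ᵥ v with hG
    have hset : {x : Fin m → ℝ | ∃ ε : Fin q → ℝ, (∀ i, ε i = 1 ∨ ε i = -1) ∧
          x = ∑ i, (ε i * Real.sqrt (y i) /
            Real.sqrt (((E i) *ᵥ v) ⬝ᵥ ((E i) *ᵥ v))) • (E i) *ᵥ v}
        = G '' Set.univ := by
      ext x
      simp only [Set.mem_setOf_eq, Set.image_univ, Set.mem_range, hG]
      constructor
      · rintro ⟨ε, hε, rfl⟩
        refine ⟨fun i => if ε i = 1 then true else false, ?_⟩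
        refine Finset.sum_congr rfl fun i _ => ?_
        rcases hε i with h | h <;> norm_num [h]
      · rintro ⟨f, rfl⟩
        exact ⟨fun i => if f i then 1 else -1,
          fun i => by by_cases h : f i <;> simp [h], rfl⟩
    have key : ∀ (f : Fin q → Bool) (j : Fin q),
        G f ⬝ᵥ ((E j) *ᵥ v) = ((if f j then (1:ℝ) else -1) * Real.sqrt (y j) /
          Real.sqrt (((E j) *ᵥ v) ⬝ᵥ ((E j) *ᵥ v))) *
          (((E j) *ᵥ v) ⬝ᵥ ((E j) *ᵥ v)) := by
      intro f j
      rw [hG]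
      exact hcomb _ j
    have hinj : Function.Injective G := by
      intro f g hfg
      funext j
      have h1 : G f ⬝ᵥ ((E j) *ᵥ v) = G g ⬝ᵥ ((E j) *ᵥ v) := by rw [hfg]
      rw [key f j, key g j] at h1
      have hdne : (((E j) *ᵥ v) ⬝ᵥ ((E j) *ᵥ v)) ≠ 0 := ne_of_gt (hdpos j)
      have h2 := mul_right_cancel₀ hdne h1
      rw [div_eq_mul_inv, div_eq_mul_inv] at h2
      have h3 := mul_right_cancel₀ (inv_ne_zero (ne_of_gt (hsqrtd j))) h2
      have h4 := mul_right_cancel₀ (ne_of_gt (Real.sqrt_pos.mpr (hy j))) h3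
      by_cases hf : f j <;> by_cases hg : g j <;> simp [hf, hg] at h4 ⊢
      · norm_num at h4
      · norm_num at h4
    rw [hset, Set.ncard_image_of_injective _ hinj, Set.ncard_univ]
    simp [Nat.card_eq_fintype_card]
  · -- transversality
    rintro x ⟨lam, rfl⟩ _ u
    refine ⟨∑ i, ((u ⬝ᵥ ((E i) *ᵥ v)) / (((E i) *ᵥ v) ⬝ᵥ ((E i) *ᵥ v))) • (E i) *ᵥ v,
      u - ∑ i, ((u ⬝ᵥ ((E i) *ᵥ v)) / (((E i) *ᵥ v) ⬝ᵥ ((E i) *ᵥ v))) • (E i) *ᵥ v,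
      ⟨fun i => (u ⬝ᵥ ((E i) *ᵥ v)) / (((E i) *ᵥ v) ⬝ᵥ ((E i) *ᵥ v)), rfl⟩,
      fun i => ?_, by abel⟩
    rw [hEx lam i, dotProduct_smul, smul_eq_mul, sub_dotProduct,
      hcomb, div_mul_cancel₀ _ (ne_of_gt (hdpos i)), sub_self, mul_zero]
end

section
/- Let Q^{−1} = −α′vvᵀ + β′I with α′, β′ > 0 (so K(x) = xᵀQ^{−1}x), yᵢ > 0. Every x ∈ v^⊥ satisfying the constraints xᵀEᵢx = yᵢ has K(x) = β′ Σᵢ yᵢ, and this value is an upper bound for K over all feasible x. Hence min of K over Λ_v ∩ Feas is at most min of K over v^⊥ ∩ Feas. -/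
open Matrix

/-- With `K(x) = xᵀ(−α′vvᵀ + β′I)x` and constraints `xᵀEᵢx = yᵢ`, every feasible
point of `v^⊥` has `K = β′Σᵢyᵢ`, this value bounds `K` over the whole feasible set, and hence
the minimum of `K` over `Λ_v ∩ Feas` is at most the minimum over `v^⊥ ∩ Feas`. -/
theorem stmt12 {m q : ℕ} (N : Fin q → Finset (Fin m))
    (hdisj : ∀ i j : Fin q, i ≠ j → Disjoint (N i) (N j))
    (hcover : Finset.univ.biUnion N = (Finset.univ : Finset (Fin m)))
    (E : Fin q → Matrix (Fin m) (Fin m) ℝ)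
    (hE : ∀ i, E i = Matrix.diagonal (fun j => if j ∈ N i then (1 : ℝ) else 0))
    (α' β' : ℝ) (hα' : 0 < α') (hβ' : 0 < β')
    (v : Fin m → ℝ) (hv : ∀ i, (E i) *ᵥ v ≠ 0)
    (y : Fin q → ℝ) (hy : ∀ i, 0 < y i)
    (K : (Fin m → ℝ) → ℝ)
    (hK : K = fun x => x ⬝ᵥ ((-α') • Matrix.vecMulVec v v
        + β' • (1 : Matrix (Fin m) (Fin m) ℝ)) *ᵥ x) :
    -- on `v^⊥ ∩ Feas` the cost is constantly `β′ Σᵢ yᵢ`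
    (∀ x : Fin m → ℝ, v ⬝ᵥ x = 0 → (∀ i, x ⬝ᵥ (E i) *ᵥ x = y i) →
        K x = β' * ∑ i, y i) ∧
    -- `β′ Σᵢ yᵢ` is an upper bound for `K` over the feasible set
    (∀ x : Fin m → ℝ, (∀ i, x ⬝ᵥ (E i) *ᵥ x = y i) → K x ≤ β' * ∑ i, y i) ∧
    -- hence the minimum over `Λ_v ∩ Feas` is at most the minimum over `v^⊥ ∩ Feas`
    (∀ x : Fin m → ℝ, v ⬝ᵥ x = 0 → (∀ i, x ⬝ᵥ (E i) *ᵥ x = y i) →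
      ∃ z : Fin m → ℝ, (∃ lam : Fin q → ℝ, z = ∑ i, lam i • (E i) *ᵥ v) ∧
        (∀ i, z ⬝ᵥ (E i) *ᵥ z = y i) ∧ K z ≤ K x) := by
  -- quadratic form for each E i
  have hEform : ∀ (i : Fin q) (x : Fin m → ℝ),
      x ⬝ᵥ (E i) *ᵥ x = ∑ j ∈ N i, x j ^ 2 := by
    intro i x
    rw [hE]
    simp only [dotProduct, mulVec_diagonal, ite_mul, one_mul, zero_mul, mul_ite, mul_zero]
    rw [Finset.sum_ite_mem, Finset.univ_inter]
    exact Finset.sum_congr rfl (fun j _ => (sq (x j)).symm)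
  -- K as explicit quadratic
  have hKform : ∀ x : Fin m → ℝ,
      K x = -α' * (v ⬝ᵥ x) ^ 2 + β' * (x ⬝ᵥ x) := by
    intro x
    rw [hK]
    have h1 : (Matrix.vecMulVec v v) *ᵥ x = (v ⬝ᵥ x) • v := by
      ext i
      simp only [mulVec, vecMulVec_apply, dotProduct, smul_eq_mul, Pi.smul_apply,
        Finset.mul_sum, Finset.sum_mul]
      exact Finset.sum_congr rfl fun j _ => by ring
    simp only [add_mulVec, smul_mulVec, one_mulVec, dotProduct_add, dotProduct_smul,
      h1, smul_eq_mul]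
    rw [dotProduct_comm x v]; ring
  -- under constraints, x ⬝ x = ∑ y
  have hnorm : ∀ x : Fin m → ℝ, (∀ i, x ⬝ᵥ (E i) *ᵥ x = y i) → x ⬝ᵥ x = ∑ i, y i := by
    intro x hx
    have : ∑ i, y i = ∑ i, ∑ j ∈ N i, x j ^ 2 := by
      refine Finset.sum_congr rfl fun i _ => ?_
      rw [← hx i, hEform]
    rw [this, ← Finset.sum_biUnion, hcover]
    · simp [dotProduct, sq]
    · intro i _ j _ hij
      exact hdisj i j hij
  -- part 1
  have part1 : ∀ x : Fin m → ℝ, v ⬝ᵥ x = 0 → (∀ i, x ⬝ᵥ (E i) *ᵥ x = y i) →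
      K x = β' * ∑ i, y i := by
    intro x hvx hx
    rw [hKform, hvx, hnorm x hx]; ring
  -- part 2
  have part2 : ∀ x : Fin m → ℝ, (∀ i, x ⬝ᵥ (E i) *ᵥ x = y i) → K x ≤ β' * ∑ i, y i := by
    intro x hx
    rw [hKform, hnorm x hx]
    nlinarith [sq_nonneg (v ⬝ᵥ x)]
  refine ⟨part1, part2, ?_⟩
  intro x hvx hx
  -- s i = squared norm of E i v restricted to N i
  set s : Fin q → ℝ := fun i => ∑ j ∈ N i, (v j) ^ 2 with hs
  have hspos : ∀ i, 0 < s i := by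
    intro i
    have h0 := hv i
    rw [hE] at h0
    obtain ⟨j, hj⟩ : ∃ j, (Matrix.diagonal (fun j => if j ∈ N i then (1:ℝ) else 0) *ᵥ v) j ≠ 0 :=
      Function.ne_iff.mp h0
    rw [mulVec_diagonal] at hj
    by_cases hjN : j ∈ N i
    · have hvj : v j ≠ 0 := by simpa [hjN] using hj
      refine Finset.sum_pos' (fun k _ => sq_nonneg _) ⟨j, hjN, by positivity⟩
    · simp [hjN] at hj
  set lam : Fin q → ℝ := fun i => Real.sqrt (y i / s i) with hlam
  set z : Fin m → ℝ := ∑ i, lam i • (E i) *ᵥ v with hz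
  -- z agrees with lam i • v on N i
  have hzval : ∀ (i : Fin q), ∀ j ∈ N i, z j = lam i * v j := by
    intro i j hj
    rw [hz]
    simp only [Finset.sum_apply, Pi.smul_apply, smul_eq_mul]
    rw [Finset.sum_eq_single i]
    · rw [hE, mulVec_diagonal]; simp [hj]
    · intro k _ hk
      rw [hE, mulVec_diagonal]
      have : j ∉ N k := fun hjk => (Finset.disjoint_left.mp (hdisj k i hk) hjk) hj
      simp [this]
    · simp
  have hzfeas : ∀ i, z ⬝ᵥ (E i) *ᵥ z = y i := by
    intro i
    rw [hEform]
    have : ∑ j ∈ N i, z j ^ 2 = ∑ j ∈ N i, (lam i) ^ 2 * (v j) ^ 2 := by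
      refine Finset.sum_congr rfl fun j hj => ?_
      rw [hzval i j hj]; ring
    rw [this, ← Finset.mul_sum]
    have hl2 : (lam i) ^ 2 = y i / s i := by
      rw [hlam]
      exact Real.sq_sqrt (div_nonneg (hy i).le (hspos i).le)
    show lam i ^ 2 * s i = y i
    rw [hl2, div_mul_cancel₀ _ (hspos i).ne']
  refine ⟨z, ⟨lam, hz⟩, hzfeas, ?_⟩
  rw [part1 x hvx hx]
  exact part2 z hzfeas
end

section
/- Let J: ℝ^m → ℝ be analytic with J ≥ 0, let x* be a critical point with J(x*) = 0 satisfying the Lojasiewicz gradient inequality |J(x)|^θ ≤ c‖grad J(x)‖ for ‖x − x*‖ < δ₁ with θ ∈ [1/2, 1) and c > 0. Then any trajectory of ẋ = −grad J(x) started at x₂ sufficiently close to x* has finite length bounded by (c/(1−θ)) J(x₂)^{1−θ}. -/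
/-!
Along the flow, `F(t) = J(x(t))` satisfies `F' = -‖ẋ‖²`, so wherever the Łojasiewicz inequality
`F^θ ≤ c‖ẋ‖` holds, `-(c/(1-θ)) (F^{1-θ})' = c F^{-θ}‖ẋ‖² ≥ ‖ẋ‖`: the length travelled is at most
`(c/(1-θ)) F(0)^{1-θ}`. Near `x*` this bound is small, so a trajectory starting close to `x*` can
never reach the boundary of the Łojasiewicz ball, and the length bound holds on all of `[0, ∞)`.
-/

open Matrix MeasureTheory

/-- The norm induced by a positive-definite matrix `M`: `‖u‖_M = √(uᵀMu)`. -/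
noncomputable def mNorm {m : ℕ} (M : Matrix (Fin m) (Fin m) ℝ) (u : Fin m → ℝ) : ℝ :=
  Real.sqrt (u ⬝ᵥ M *ᵥ u)

open Set Filter Topology

section MNorm

open scoped MatrixOrder

variable {m : ℕ} {M : Matrix (Fin m) (Fin m) ℝ}

lemma mNorm_nonneg (u : Fin m → ℝ) : 0 ≤ mNorm M u :=
  Real.sqrt_nonneg _

lemma mNorm_neg (u : Fin m → ℝ) : mNorm M (-u) = mNorm M u := by
  simp [mNorm, mulVec_neg]

lemma sq_mNorm (hM : M.PosSemidef) (u : Fin m → ℝ) : mNorm M u ^ 2 = u ⬝ᵥ M *ᵥ u :=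
  Real.sq_sqrt (by simpa using hM.dotProduct_mulVec_nonneg u)

noncomputable def sqrtCLM (M : Matrix (Fin m) (Fin m) ℝ) :
    (Fin m → ℝ) →L[ℝ] EuclideanSpace ℝ (Fin m) :=
  (EuclideanSpace.equiv (Fin m) ℝ).symm.toContinuousLinearMap ∘L
    LinearMap.toContinuousLinearMap (Matrix.toLin' (CFC.sqrt M))

lemma mNorm_eq_norm_sqrtCLM (hM : M.PosSemidef) (u : Fin m → ℝ) :
    mNorm M u = ‖sqrtCLM M u‖ := by
  have hsymm : (CFC.sqrt M)ᵀ = CFC.sqrt M := by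
    simpa [IsSelfAdjoint, Matrix.star_eq_conjTranspose] using
      (CFC.sqrt_nonneg M).isSelfAdjoint
  have hsq : (CFC.sqrt M *ᵥ u) ⬝ᵥ (CFC.sqrt M *ᵥ u) = u ⬝ᵥ M *ᵥ u := by
    rw [Matrix.dotProduct_mulVec _ _ u, Matrix.vecMul_mulVec, hsymm,
      CFC.sqrt_mul_sqrt_self M hM.nonneg, ← Matrix.dotProduct_mulVec]
  rw [EuclideanSpace.norm_eq, mNorm, ← hsq, dotProduct]
  congr 1
  refine Finset.sum_congr rfl fun i _ => ?_
  simp [sqrtCLM, sq]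

lemma continuous_mNorm (hM : M.PosSemidef) : Continuous (mNorm M) := by
  simpa only [funext (mNorm_eq_norm_sqrtCLM hM)] using (sqrtCLM M).continuous.norm

lemma sqrtCLM_injective (hM : M.PosDef) : Function.Injective (sqrtCLM M) := by
  refine (injective_iff_map_eq_zero _).2 fun u hu => ?_
  by_contra hne
  have hpos : 0 < mNorm M u ^ 2 := by
    simpa [sq_mNorm hM.posSemidef] using hM.dotProduct_mulVec_pos hne
  simp [mNorm_eq_norm_sqrtCLM hM.posSemidef, hu] at hpos

lemma exists_pos_forall_mNorm_lt_imp (hM : M.PosDef) {p : Fin m → ℝ}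
    {P : (Fin m → ℝ) → Prop} (hP : ∀ᶠ z in 𝓝 p, P z) :
    ∃ δ > 0, ∀ z, mNorm M (z - p) < δ → P z := by
  have hind := (LinearMap.isClosedEmbedding_of_injective
    (f := (sqrtCLM M : (Fin m → ℝ) →ₗ[ℝ] EuclideanSpace ℝ (Fin m)))
    (LinearMap.ker_eq_bot.2 (sqrtCLM_injective hM))).isInducing
  rw [hind.nhds_eq_comap, Filter.eventually_comap, Metric.eventually_nhds_iff] at hP
  obtain ⟨δ, hδ, hδP⟩ := hP
  refine ⟨δ, hδ, fun z hz => hδP ?_ z rfl⟩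
  simpa [dist_eq_norm, ← map_sub, ← mNorm_eq_norm_sqrtCLM hM.posSemidef] using hz

lemma mNorm_sub_le_add_integral (hM : M.PosSemidef) {x v : ℝ → Fin m → ℝ}
    (hx : ∀ t, HasDerivAt x (v t) t) (hv : Continuous v) (p : Fin m → ℝ) {t : ℝ}
    (ht : 0 ≤ t) :
    mNorm M (x t - p) ≤ mNorm M (x 0 - p) + ∫ s in 0..t, mNorm M (v s) := by
  set E := sqrtCLM M
  have hftc : ∫ s in 0..t, E (v s) = E (x t) - E (x 0) :=
    intervalIntegral.integral_eq_sub_of_hasDerivAt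
      (fun s _ => E.hasFDerivAt.comp_hasDerivAt s (hx s))
      ((E.continuous.comp hv).intervalIntegrable _ _)
  have hlen : ‖E (x t) - E (x 0)‖ ≤ ∫ s in 0..t, mNorm M (v s) := by
    simpa only [← hftc, mNorm_eq_norm_sqrtCLM hM] using
      intervalIntegral.norm_integral_le_integral_norm ht
  simp only [mNorm_eq_norm_sqrtCLM hM, map_sub] at hlen ⊢
  calc ‖E (x t) - E p‖ ≤ ‖E (x 0) - E p‖ + ‖E (x t) - E (x 0)‖ := by
        simpa using norm_add_le (E (x 0) - E p) (E (x t) - E (x 0))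
    _ ≤ _ := by gcongr

end MNorm

lemma intervalIntegral_le_of_hasDerivAt_neg_sq {F φ : ℝ → ℝ} {θ c a b : ℝ} (hθ : θ < 1)
    (hab : a ≤ b) (hF : ∀ t, HasDerivAt F (-φ t ^ 2) t) (hF₀ : ∀ t, 0 ≤ F t)
    (hφ : Continuous φ) (hφ₀ : ∀ t, 0 ≤ φ t)
    (hloja : ∀ t ∈ Ioo a b, F t ^ θ ≤ c * φ t) :
    ∫ t in a..b, φ t ≤ c / (1 - θ) * (F a ^ (1 - θ) - F b ^ (1 - θ)) := by
  have h1θ : 0 < 1 - θ := by linarith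
  have hanti : Antitone F :=
    antitone_of_hasDerivAt_nonpos hF fun t => neg_nonpos.2 (sq_nonneg _)
  have hφ_eq_zero : ∀ t, F t = 0 → φ t = 0 := by
    intro t ht
    have hmin : IsLocalMin F t := .of_forall fun s => ht ▸ hF₀ s
    simpa using hmin.hasDerivAt_eq_zero (hF t)
  set G : ℝ → ℝ := fun t => -(c / (1 - θ)) * F t ^ (1 - θ)
  set G' : ℝ → ℝ := fun t => c * F t ^ (-θ) * φ t ^ 2
  -- `F ^ (1 - θ)` need not be differentiable where `F` vanishes: only right derivatives are used
  have hG : ∀ t, HasDerivWithinAt G (G' t) (Ioi t) t := by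
    intro t
    rcases (hF₀ t).lt_or_eq with hpos | hzero
    · have := ((hF t).rpow_const (p := 1 - θ) (.inl hpos.ne')).const_mul (-(c / (1 - θ)))
      refine (this.congr_deriv ?_).hasDerivWithinAt
      simp only [G', show 1 - θ - 1 = -θ by ring]
      field_simp
    -- once `F` vanishes it stays `0`, so `G` is constant to the right of `t`
    · have hG0 : EqOn G (fun _ => 0) (Ici t) := fun s hs => by
        have : F s = 0 := le_antisymm (hzero ▸ hanti hs) (hF₀ s)
        simp [G, this, Real.zero_rpow h1θ.ne']
      have hG't : G' t = 0 := by simp [G', hφ_eq_zero t hzero.symm]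
      rw [hG't]
      exact (hasDerivWithinAt_const t _ 0).congr (hG0.mono Ioi_subset_Ici_self)
        (hG0 self_mem_Ici)
  have hφG' : ∀ t ∈ Ioo a b, φ t ≤ G' t := by
    intro t ht
    rcases (hF₀ t).lt_or_eq with hpos | hzero
    · calc φ t = F t ^ θ * φ t * F t ^ (-θ) := by
            rw [Real.rpow_neg hpos.le]; field_simp
        _ ≤ c * φ t * φ t * F t ^ (-θ) :=
          mul_le_mul_of_nonneg_right (mul_le_mul_of_nonneg_right (hloja t ht) (hφ₀ t))
            (Real.rpow_nonneg hpos.le _)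
        _ = G' t := by ring
    · simp [G', hφ_eq_zero t hzero.symm]
  have hGcont : Continuous G :=
    continuous_const.mul ((Real.continuous_rpow_const h1θ.le).comp
      (continuous_iff_continuousAt.2 fun t => (hF t).continuousAt))
  calc ∫ t in a..b, φ t ≤ G b - G a :=
        intervalIntegral.integral_le_sub_of_hasDeriv_right_of_le hab hGcont.continuousOn
          (fun t _ => hG t) hφ.integrableOn_Icc hφG'
    _ = c / (1 - θ) * (F a ^ (1 - θ) - F b ^ (1 - θ)) := by ring

section GradientFlow

variable {m : ℕ} {M : Matrix (Fin m) (Fin m) ℝ} {J : (Fin m → ℝ) → ℝ}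
  {g : (Fin m → ℝ) → Fin m → ℝ}

lemma fderiv_apply_eq_of_hasDerivAt_line {z w : Fin m → ℝ} {d : ℝ}
    (hJ : DifferentiableAt ℝ J z) (h : HasDerivAt (fun s : ℝ => J (z + s • w)) d 0) :
    fderiv ℝ J z w = d := by
  rw [← hJ.lineDeriv_eq_fderiv, lineDeriv, h.deriv]

lemma continuous_of_fderiv_eq_dotProduct (hM : IsUnit M) (hJ : ContDiff ℝ 1 J)
    (hgJ : ∀ z w, fderiv ℝ J z w = g z ⬝ᵥ M *ᵥ w) : Continuous g := by
  have hdet : IsUnit M.det := (Matrix.isUnit_iff_isUnit_det M).1 hM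
  have hg : ∀ z, g z = (fun j => fderiv ℝ J z (Pi.single j 1)) ᵥ* M⁻¹ := by
    intro z
    have hgM : g z ᵥ* M = fun j => fderiv ℝ J z (Pi.single j 1) := by
      funext j
      simp [hgJ, dotProduct, Matrix.vecMul, mul_comm]
    rw [← hgM, Matrix.vecMul_vecMul, Matrix.mul_nonsing_inv _ hdet, Matrix.vecMul_one]
  rw [funext hg]
  exact (continuous_pi fun j => (hJ.continuous_fderiv one_ne_zero).clm_apply
    continuous_const).matrix_vecMul continuous_const

lemma hasDerivAt_comp_neg_gradient (hM : M.PosSemidef) (hJ : Differentiable ℝ J)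
    (hgJ : ∀ z w, fderiv ℝ J z w = g z ⬝ᵥ M *ᵥ w) {x : ℝ → Fin m → ℝ} {t : ℝ}
    (hx : HasDerivAt x (-g (x t)) t) :
    HasDerivAt (fun t => J (x t)) (-mNorm M (g (x t)) ^ 2) t := by
  refine ((hJ (x t)).hasFDerivAt.comp_hasDerivAt t hx).congr_deriv ?_
  rw [hgJ, mulVec_neg, dotProduct_neg, sq_mNorm hM]

lemma intervalIntegral_mNorm_le_of_lojasiewicz (hM : M.PosSemidef) (hJ : Differentiable ℝ J)
    (hJ₀ : ∀ z, 0 ≤ J z) (hgJ : ∀ z w, fderiv ℝ J z w = g z ⬝ᵥ M *ᵥ w)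
    (hg : Continuous g)
    {θ c : ℝ} (hθ : θ < 1) (hc : 0 ≤ c) {x : ℝ → Fin m → ℝ}
    (hx : ∀ t, HasDerivAt x (-g (x t)) t) {b : ℝ} (hb : 0 ≤ b)
    (hloja : ∀ s ∈ Ioo 0 b, J (x s) ^ θ ≤ c * mNorm M (g (x s))) :
    ∫ s in 0..b, mNorm M (g (x s)) ≤ c / (1 - θ) * J (x 0) ^ (1 - θ) := by
  have hxc : Continuous x := continuous_iff_continuousAt.2 fun t => (hx t).continuousAt
  have h1θ : 0 < 1 - θ := by linarith
  calc ∫ s in 0..b, mNorm M (g (x s))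
      ≤ c / (1 - θ) * (J (x 0) ^ (1 - θ) - J (x b) ^ (1 - θ)) :=
        intervalIntegral_le_of_hasDerivAt_neg_sq hθ hb
          (fun t => hasDerivAt_comp_neg_gradient hM hJ hgJ (hx t)) (fun t => hJ₀ _)
          ((continuous_mNorm hM).comp (hg.comp hxc)) (fun t => mNorm_nonneg _) hloja
    _ ≤ c / (1 - θ) * J (x 0) ^ (1 - θ) := by
        gcongr
        exact sub_le_self _ (Real.rpow_nonneg (hJ₀ _) _)

end GradientFlow

lemma forall_lt_of_continuous {ρ : ℝ → ℝ} (hρ : Continuous ρ) {R : ℝ}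
    (h : ∀ T, 0 ≤ T → (∀ s ∈ Ico 0 T, ρ s < R) → ρ T < R) :
    ∀ t, 0 ≤ t → ρ t < R := by
  by_contra! hexit
  set S := {t | 0 ≤ t ∧ R ≤ ρ t}
  have hSbdd : BddBelow S := ⟨0, fun s hs => hs.1⟩
  have hSclosed : IsClosed S :=
    (isClosed_le continuous_const continuous_id).inter (isClosed_le continuous_const hρ)
  have hT : sInf S ∈ S := hSclosed.csInf_mem hexit hSbdd
  refine (h _ hT.1 fun s hs => ?_).not_ge hT.2
  by_contra! hsR
  exact (csInf_le hSbdd ⟨hs.1, hsR⟩).not_gt hs.2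

lemma integrableOn_Ici_and_integral_le {φ : ℝ → ℝ} (hφ : Continuous φ)
    (hφ₀ : ∀ t, 0 ≤ φ t) {C : ℝ} (hC : ∀ b, 0 ≤ b → ∫ t in 0..b, φ t ≤ C) :
    IntegrableOn φ (Ici 0) ∧ ∫ t in Ici 0, φ t ≤ C := by
  have hbound : ∀ᶠ b in atTop, ∫ t in 0..b, φ t ≤ C := eventually_ge_atTop 0 |>.mono hC
  have hint : IntegrableOn φ (Ioi 0) :=
    integrableOn_Ioi_of_intervalIntegral_norm_bounded C 0 (fun _ => hφ.integrableOn_Ioc)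
      tendsto_id (by simpa only [Real.norm_of_nonneg (hφ₀ _), id] using hbound)
  refine ⟨(integrableOn_Ici_iff_integrableOn_Ioi (f := φ)).2 hint, ?_⟩
  rw [integral_Ici_eq_integral_Ioi]
  exact le_of_tendsto (intervalIntegral_tendsto_integral_Ioi 0 hint tendsto_id) hbound

theorem stmt18_general {m : ℕ} (M : Matrix (Fin m) (Fin m) ℝ) (hM : M.PosDef)
    (J : (Fin m → ℝ) → ℝ) (hanalytic : ∀ x, AnalyticAt ℝ J x)
    (hJnonneg : ∀ x, 0 ≤ J x)
    (g : (Fin m → ℝ) → (Fin m → ℝ))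
    -- `g` is the gradient of `J` w.r.t. the inner product `⟨u,w⟩ = uᵀMw`
    (hg : ∀ x w : Fin m → ℝ,
      HasDerivAt (fun s : ℝ => J (x + s • w)) ((g x) ⬝ᵥ M *ᵥ w) 0)
    (xstar : Fin m → ℝ) (hJ0 : J xstar = 0)
    (θ c δ₁ : ℝ) (hθ : 1/2 ≤ θ ∧ θ < 1) (hc : 0 < c) (hδ₁ : 0 < δ₁)
    -- Lojasiewicz gradient inequality
    (hloja : ∀ x : Fin m → ℝ, mNorm M (x - xstar) < δ₁ →
      |J x| ^ θ ≤ c * mNorm M (g x)) :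
    ∃ δ₂ : ℝ, 0 < δ₂ ∧
      ∀ x : ℝ → (Fin m → ℝ),
        (∀ t : ℝ, HasDerivAt x (-(g (x t))) t) →
        mNorm M (x 0 - xstar) < δ₂ →
        Filter.Tendsto (fun t => J (x t)) Filter.atTop (nhds 0) →
        IntegrableOn (fun t => mNorm M (g (x t))) (Set.Ici (0 : ℝ)) ∧
        ∫ t in Set.Ici (0 : ℝ), mNorm M (g (x t))
          ≤ (c / (1 - θ)) * (J (x 0)) ^ (1 - θ) := by
  have h1θ : 0 < 1 - θ := by linarith [hθ.2]
  have hJ : ContDiff ℝ 1 J := contDiff_iff_contDiffAt.2 fun z => (hanalytic z).contDiffAt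
  have hJd : Differentiable ℝ J := hJ.differentiable one_ne_zero
  have hgJ : ∀ z w, fderiv ℝ J z w = g z ⬝ᵥ M *ᵥ w := fun z w =>
    fderiv_apply_eq_of_hasDerivAt_line (hJd z) (hg z w)
  have hgc : Continuous g := continuous_of_fderiv_eq_dotProduct hM.isUnit hJ hgJ
  have hsmall : ∀ᶠ z in 𝓝 xstar, c / (1 - θ) * J z ^ (1 - θ) < δ₁ / 2 := by
    refine (continuous_const.mul ((Real.continuous_rpow_const h1θ.le).comp
      hJd.continuous)).continuousAt.eventually_lt continuousAt_const ?_
    simp [hJ0, Real.zero_rpow h1θ.ne', hδ₁]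
  obtain ⟨δ, hδ, hδsmall⟩ := exists_pos_forall_mNorm_lt_imp hM hsmall
  refine ⟨min δ (δ₁ / 2), by positivity, fun x hx hx0 _ => ?_⟩
  have hxc : Continuous x := continuous_iff_continuousAt.2 fun t => (hx t).continuousAt
  have hlen : ∀ b, 0 ≤ b → (∀ s ∈ Ioo 0 b, mNorm M (x s - xstar) < δ₁) →
      ∫ s in 0..b, mNorm M (g (x s)) ≤ c / (1 - θ) * J (x 0) ^ (1 - θ) := fun b hb hball =>
    intervalIntegral_mNorm_le_of_lojasiewicz hM.posSemidef hJd hJnonneg hgJ hgc hθ.2 hc.le hx hb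
      fun s hs => by simpa [abs_of_nonneg (hJnonneg _)] using hloja _ (hball s hs)
  have hstay : ∀ t, 0 ≤ t → mNorm M (x t - xstar) < δ₁ :=
    forall_lt_of_continuous ((continuous_mNorm hM.posSemidef).comp (hxc.sub continuous_const))
      fun T hT hball => calc
        mNorm M (x T - xstar) ≤ mNorm M (x 0 - xstar) + ∫ s in 0..T, mNorm M (g (x s)) := by
          simpa only [mNorm_neg] using
            mNorm_sub_le_add_integral hM.posSemidef hx (hgc.comp hxc).neg xstar hT
        _ < δ₁ / 2 + δ₁ / 2 :=
          add_lt_add_of_lt_of_le (hx0.trans_le (min_le_right _ _))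
            ((hlen T hT fun s hs => hball s (Ioo_subset_Ico_self hs)).trans
              (hδsmall _ (hx0.trans_le (min_le_left _ _))).le)
        _ = δ₁ := add_halves δ₁
  exact integrableOn_Ici_and_integral_le ((continuous_mNorm hM.posSemidef).comp (hgc.comp hxc))
    (fun _ => mNorm_nonneg _) fun b hb => hlen b hb fun s hs => hstay s hs.1.le

/-- Lojasiewicz length bound. If `J ≥ 0` is analytic, `x*` is a critical point
with `J(x*) = 0` satisfying the Lojasiewicz gradient inequality near `x*`, then every gradient
trajectory started sufficiently close to `x*` (along which `J → 0`) has finite length bounded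
by `(c/(1−θ)) J(x₂)^{1−θ}`. -/
theorem stmt18 {m : ℕ} (M : Matrix (Fin m) (Fin m) ℝ) (hM : M.PosDef)
    (J : (Fin m → ℝ) → ℝ) (hanalytic : ∀ x, AnalyticAt ℝ J x)
    (hJnonneg : ∀ x, 0 ≤ J x)
    (g : (Fin m → ℝ) → (Fin m → ℝ))
    -- `g` is the gradient of `J` w.r.t. the inner product `⟨u,w⟩ = uᵀMw`
    (hg : ∀ x w : Fin m → ℝ,
      HasDerivAt (fun s : ℝ => J (x + s • w)) ((g x) ⬝ᵥ M *ᵥ w) 0)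
    (xstar : Fin m → ℝ) (hcrit : g xstar = 0) (hJ0 : J xstar = 0)
    (θ c δ₁ : ℝ) (hθ : 1/2 ≤ θ ∧ θ < 1) (hc : 0 < c) (hδ₁ : 0 < δ₁)
    -- Lojasiewicz gradient inequality
    (hloja : ∀ x : Fin m → ℝ, mNorm M (x - xstar) < δ₁ →
      |J x| ^ θ ≤ c * mNorm M (g x)) :
    ∃ δ₂ : ℝ, 0 < δ₂ ∧
      ∀ x : ℝ → (Fin m → ℝ),
        (∀ t : ℝ, HasDerivAt x (-(g (x t))) t) →
        mNorm M (x 0 - xstar) < δ₂ →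
        Filter.Tendsto (fun t => J (x t)) Filter.atTop (nhds 0) →
        IntegrableOn (fun t => mNorm M (g (x t))) (Set.Ici (0 : ℝ)) ∧
        ∫ t in Set.Ici (0 : ℝ), mNorm M (g (x t))
          ≤ (c / (1 - θ)) * (J (x 0)) ^ (1 - θ) :=
  stmt18_general M hM J hanalytic hJnonneg g hg xstar hJ0 θ c δ₁ hθ hc hδ₁ hloja
end

section
/- Let Q = αvvᵀ + βI (α, β > 0, Eᵢv ≠ 0 ∀i) and let w ∈ ℝ^m be an eigenvector of Q·(Σᵢ yᵢEᵢ) associated with its largest eigenvalue μ. Then, provided μ ≠ βyᵢ for all i, w ∈ Λ_v; moreover writing w = Σᵢ λᵢEᵢv, all λᵢ have the same sign (all ≥ 0 or all ≤ 0). -/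
/-!
Write `Σᵢ yᵢEᵢ = diag d` with `d` constant on the blocks. An eigenpair `(μ, w)` of
`(αvvᵀ + βI) diag d` satisfies `(μ - β dⱼ) wⱼ = c vⱼ` with `c = α v ⬝ᵥ (d * w)`, so once `μ`
exceeds every `β yᵢ` we get `w = Σᵢ c / (μ - β yᵢ) • Eᵢ v`, with all coefficients of the sign
of `c`. That `μ > max β yᵢ` comes from maximality of `μ`: pick `j₀` with `v j₀ ≠ 0` in a block
maximising `β yᵢ`; the secular function `t ↦ α Σⱼ dⱼ vⱼ² / (t - β dⱼ)` falls from `+∞` to `0`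
on `(β d j₀, ∞)`, so it equals `1` at some `t`, and then `uⱼ = vⱼ / (t - β dⱼ)` is an
eigenvector for `t`.
-/

open Matrix Finset Function

section BlockPartition

variable {ι n : Type*} [Fintype ι] [DecidableEq ι] [DecidableEq n]

theorem exists_blockIndex [Fintype n] (N : ι → Finset n) (hdisj : Pairwise (Disjoint on N))
    (hcover : univ.biUnion N = univ) : ∃ b : n → ι, ∀ i j, j ∈ N i ↔ b j = i := by
  have hmem (j : n) : ∃ i, j ∈ N i := by
    simpa using (hcover ▸ mem_univ j : j ∈ univ.biUnion N)
  choose b hb using hmem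
  refine ⟨b, fun i j => ⟨fun hj => ?_, fun h => h ▸ hb j⟩⟩
  by_contra hne
  exact disjoint_left.mp (hdisj hne) (hb j) hj

variable {R : Type*} [CommRing R] {N : ι → Finset n} {b : n → ι}

theorem sum_smul_diagonal_indicator (hb : ∀ i j, j ∈ N i ↔ b j = i) (y : ι → R) :
    ∑ i, y i • diagonal (fun j => if j ∈ N i then (1 : R) else 0) = diagonal (y ∘ b) := by
  ext j k
  rcases eq_or_ne j k with rfl | hjk
  · simp [Matrix.sum_apply, hb]
  · simp [Matrix.sum_apply, hjk]

theorem sum_smul_diagonal_indicator_mulVec [Fintype n] (hb : ∀ i j, j ∈ N i ↔ b j = i)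
    (c : ι → R) (v : n → R) :
    ∑ i, c i • diagonal (fun j => if j ∈ N i then (1 : R) else 0) *ᵥ v =
      fun j => c (b j) * v j := by
  ext j
  simp_rw [← smul_mulVec, ← sum_mulVec, sum_smul_diagonal_indicator hb, mulVec_diagonal,
    Function.comp_apply]

end BlockPartition

theorem rankOne_add_smul_one_mul_diagonal_mulVec {R n : Type*} [CommRing R] [Fintype n]
    [DecidableEq n] (α β : R) (v d u : n → R) :
    ((α • vecMulVec v v + β • 1) * diagonal d) *ᵥ u = (α * (v ⬝ᵥ (d * u))) • v + β • (d * u) := by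
  have hdu : diagonal d *ᵥ u = d * u := funext (mulVec_diagonal d u)
  ext j
  simp [← mulVec_mulVec, hdu, add_mulVec, smul_mulVec, vecMulVec_mulVec, mul_smul]

theorem exists_secular_root {n : Type*} [Fintype n] {a s : n → ℝ} {j₀ : n}
    (ha : ∀ j, 0 ≤ a j) (ha₀ : 0 < a j₀) (hs : ∀ j, s j ≤ s j₀) :
    ∃ t, s j₀ < t ∧ ∑ j, a j / (t - s j) = 1 := by
  set A := ∑ j, a j
  have hA : a j₀ ≤ A := single_le_sum (fun j _ => ha j) (mem_univ j₀)
  set t₀ := s j₀ + a j₀ / 2 with ht₀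
  set t₁ := s j₀ + (A + 1)
  have ht₀₁ : t₀ ≤ t₁ := by linarith
  have hgap {t} (ht : t₀ ≤ t) (j : n) : 0 < t - s j := by linarith [hs j]
  have hcont : ContinuousOn (fun t => ∑ j, a j / (t - s j)) (Set.Icc t₀ t₁) :=
    continuousOn_finsetSum _ fun j _ => continuousOn_const.div (by fun_prop)
      fun t ht => (hgap ht.1 j).ne'
  have hleft : 1 ≤ ∑ j, a j / (t₀ - s j) :=
    calc (1 : ℝ) ≤ a j₀ / (t₀ - s j₀) := by
          rw [ht₀, add_sub_cancel_left, div_div_cancel₀ ha₀.ne']; norm_num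
      _ ≤ ∑ j, a j / (t₀ - s j) :=
          single_le_sum (f := fun j => a j / (t₀ - s j))
            (fun j _ => div_nonneg (ha j) (hgap le_rfl j).le) (mem_univ j₀)
  have hright : ∑ j, a j / (t₁ - s j) ≤ 1 :=
    calc ∑ j, a j / (t₁ - s j) ≤ ∑ j, a j / (A + 1) :=
          sum_le_sum fun j _ => div_le_div_of_nonneg_left (ha j) (by linarith) (by linarith [hs j])
      _ = A / (A + 1) := by rw [sum_div]
      _ ≤ 1 := (div_le_one (by linarith)).mpr (by linarith)
  obtain ⟨t, ht, hroot⟩ := intermediate_value_Icc' ht₀₁ hcont ⟨hright, hleft⟩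
  exact ⟨t, by linarith [ht.1], hroot⟩

section RankOnePerturbation

variable {n : Type*} [Fintype n] [DecidableEq n] {α β : ℝ} {v d : n → ℝ}

theorem rankOne_add_smul_one_mul_diagonal_exists_eigenvector_gt (hα : 0 < α)
    (hd : ∀ j, 0 ≤ d j) {j₀ : n} (hv₀ : v j₀ ≠ 0) (hd₀ : 0 < d j₀)
    (hmax : ∀ j, β * d j ≤ β * d j₀) :
    ∃ t, β * d j₀ < t ∧ ∃ u ≠ 0, ((α • vecMulVec v v + β • 1) * diagonal d) *ᵥ u = t • u := by
  obtain ⟨t, ht, hroot⟩ := exists_secular_root (a := fun j => α * (d j * v j ^ 2))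
    (fun j => by have := hd j; positivity) (by positivity) hmax
  have hgap (j : n) : t - β * d j ≠ 0 := by linarith [hmax j]
  refine ⟨t, ht, fun j => v j / (t - β * d j), fun hu => hv₀ ?_, ?_⟩
  · simpa [hgap j₀] using congrFun hu j₀
  have hc : α * (v ⬝ᵥ (d * fun j => v j / (t - β * d j))) = 1 := by
    rw [← hroot, dotProduct, mul_sum]
    refine sum_congr rfl fun j _ => ?_
    simp only [Pi.mul_apply]
    ring
  ext j
  rw [rankOne_add_smul_one_mul_diagonal_mulVec, hc]
  simp only [one_smul, Pi.add_apply, Pi.smul_apply, Pi.mul_apply, smul_eq_mul]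
  field_simp [hgap j]
  ring

theorem rankOne_add_smul_one_mul_diagonal_eigenvector_eq {μ : ℝ} {w : n → ℝ}
    (heig : ((α • vecMulVec v v + β • 1) * diagonal d) *ᵥ w = μ • w) (hμ : ∀ j, μ ≠ β * d j) :
    w = fun j => α * (v ⬝ᵥ (d * w)) / (μ - β * d j) * v j := by
  ext j
  have hj := congrFun heig j
  rw [rankOne_add_smul_one_mul_diagonal_mulVec] at hj
  simp only [Pi.add_apply, Pi.smul_apply, Pi.mul_apply, smul_eq_mul] at hj
  field_simp [sub_ne_zero.mpr (hμ j)]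
  linarith

end RankOnePerturbation

theorem stmt19_general {m q : ℕ} (N : Fin q → Finset (Fin m))
    (hdisj : ∀ i j : Fin q, i ≠ j → Disjoint (N i) (N j))
    (hcover : Finset.univ.biUnion N = (Finset.univ : Finset (Fin m)))
    (E : Fin q → Matrix (Fin m) (Fin m) ℝ)
    (hE : ∀ i, E i = Matrix.diagonal (fun j => if j ∈ N i then (1 : ℝ) else 0))
    (α β : ℝ) (hα : 0 < α)
    (v : Fin m → ℝ) (hv : ∀ i, (E i) *ᵥ v ≠ 0)
    (y : Fin q → ℝ) (hy : ∀ i, 0 < y i)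
    (Q : Matrix (Fin m) (Fin m) ℝ)
    (hQ : Q = α • Matrix.vecMulVec v v + β • (1 : Matrix (Fin m) (Fin m) ℝ))
    (μ : ℝ) (w : Fin m → ℝ)
    (heig : (Q * (∑ i, y i • E i)) *ᵥ w = μ • w)
    -- `μ` is the largest eigenvalue
    (hmax : ∀ μ' : ℝ, (∃ u : Fin m → ℝ, u ≠ 0 ∧ (Q * (∑ i, y i • E i)) *ᵥ u = μ' • u) →
      μ' ≤ μ) :
    ∃ lam : Fin q → ℝ, w = ∑ i, lam i • (E i) *ᵥ v ∧
      ((∀ i, 0 ≤ lam i) ∨ (∀ i, lam i ≤ 0)) := by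
  obtain ⟨b, hb⟩ := exists_blockIndex N hdisj hcover
  obtain rfl : E = _ := funext hE
  subst hQ
  rw [sum_smul_diagonal_indicator hb] at heig hmax
  rcases isEmpty_or_nonempty (Fin q) with hq | hq
  · exact ⟨0, funext fun j => isEmptyElim (b j), Or.inl isEmptyElim⟩
  obtain ⟨i₀, -, hi₀⟩ := univ.exists_max_image (fun i => β * y i) univ_nonempty
  obtain ⟨j₀, rfl, hvj₀⟩ : ∃ j, b j = i₀ ∧ v j ≠ 0 := by
    simpa [Function.ne_iff, mulVec_diagonal, hb] using hv i₀
  obtain ⟨t, ht, u, hu, htu⟩ := rankOne_add_smul_one_mul_diagonal_exists_eigenvector_gt hα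
    (d := y ∘ b) (fun j => (hy _).le) hvj₀ (hy _) (fun j => hi₀ _ (mem_univ _))
  have hμ (i : Fin q) : β * y i < μ :=
    (hi₀ i (mem_univ _)).trans_lt (ht.trans_le (hmax t ⟨u, hu, htu⟩))
  set c := α * (v ⬝ᵥ ((y ∘ b) * w))
  refine ⟨fun i => c / (μ - β * y i), ?_, ?_⟩
  · rw [sum_smul_diagonal_indicator_mulVec hb]
    exact rankOne_add_smul_one_mul_diagonal_eigenvector_eq heig fun j => (hμ (b j)).ne'
  · rcases le_total 0 c with hc | hc
    · exact Or.inl fun i => div_nonneg hc (sub_pos.mpr (hμ i)).le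
    · exact Or.inr fun i => div_nonpos_of_nonpos_of_nonneg hc (sub_pos.mpr (hμ i)).le

/-- If `w` is an eigenvector of `Q(Σᵢ yᵢEᵢ)` (with `Q = αvvᵀ + βI`) for its
largest eigenvalue `μ`, and `μ ≠ βyᵢ` for all `i`, then `w ∈ Λ_v`, i.e. `w = Σᵢ λᵢEᵢv`, and
all the `λᵢ` have the same sign. -/
theorem stmt19 {m q : ℕ} (N : Fin q → Finset (Fin m))
    (hdisj : ∀ i j : Fin q, i ≠ j → Disjoint (N i) (N j))
    (hcover : Finset.univ.biUnion N = (Finset.univ : Finset (Fin m)))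
    (E : Fin q → Matrix (Fin m) (Fin m) ℝ)
    (hE : ∀ i, E i = Matrix.diagonal (fun j => if j ∈ N i then (1 : ℝ) else 0))
    (α β : ℝ) (hα : 0 < α) (hβ : 0 < β)
    (v : Fin m → ℝ) (hv : ∀ i, (E i) *ᵥ v ≠ 0)
    (y : Fin q → ℝ) (hy : ∀ i, 0 < y i)
    (Q : Matrix (Fin m) (Fin m) ℝ)
    (hQ : Q = α • Matrix.vecMulVec v v + β • (1 : Matrix (Fin m) (Fin m) ℝ))
    (μ : ℝ) (w : Fin m → ℝ) (hw : w ≠ 0)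
    (heig : (Q * (∑ i, y i • E i)) *ᵥ w = μ • w)
    -- `μ` is the largest eigenvalue
    (hmax : ∀ μ' : ℝ, (∃ u : Fin m → ℝ, u ≠ 0 ∧ (Q * (∑ i, y i • E i)) *ᵥ u = μ' • u) →
      μ' ≤ μ)
    (hne : ∀ i, μ ≠ β * y i) :
    ∃ lam : Fin q → ℝ, w = ∑ i, lam i • (E i) *ᵥ v ∧
      ((∀ i, 0 ≤ lam i) ∨ (∀ i, lam i ≤ 0)) :=
  stmt19_general N hdisj hcover E hE α β hα v hv y hy Q hQ μ w heig hmax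
end
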